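/- arXiv:math/0410609 — 4 statements merged into one kernel-verified Lean document; each statement's English description precedes it below -/
import Mathlib

section
/- Let T > 0 and c ≥ 0. Let Ω ⊆ (−T,T) × ℝ be a nonempty open set that is invariant under the translation (s,t) ↦ (s,t+1). Let u : ℝ² → ℝ be continuous, 1-periodic in the second variable (u(s,t+1) = u(s,t) for all (s,t)), and twice continuously differentiable on Ω, and let b : Ω → ℝ be a function such that either b(p) ≥ −c for all p ∈ Ω, or b(p) ≤ c for all p ∈ Ω. If (∂_s²u)(p) + (∂_t²u)(p) − b(p)·(∂_su)(p) ≥ 0 for every p ∈ Ω, then the supremum of u over the closure of Ω equals the supremum of u over the topological frontier of Ω. -/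
open Filter Set Topology

/-- Partial derivative with respect to the first coordinate `s` of a function on `ℝ²`. -/
noncomputable def pderivS (u : ℝ × ℝ → ℝ) (p : ℝ × ℝ) : ℝ :=
  fderiv ℝ u p (1, 0)

/-- Partial derivative with respect to the second coordinate `t` of a function on `ℝ²`. -/
noncomputable def pderivT (u : ℝ × ℝ → ℝ) (p : ℝ × ℝ) : ℝ :=
  fderiv ℝ u p (0, 1)

/-- 1D: a local max at 0 with vanishing first derivative cannot have
positive second derivative. -/
lemma aux_no_localmax_of_pos_secondderiv {g g' : ℝ → ℝ} {n : Set ℝ}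
    (hn : n ∈ 𝓝 (0:ℝ))
    (hg : ∀ x ∈ n, HasDerivAt g (g' x) x)
    (hmax : IsLocalMax g 0) (hg'0 : g' 0 = 0)
    {d : ℝ} (hd : HasDerivAt g' d 0) (hdpos : 0 < d) : False := by
  have hslope : Tendsto (slope g' 0) (𝓝[≠] (0:ℝ)) (𝓝 d) :=
    hasDerivAt_iff_tendsto_slope.mp hd
  have hpos : ∀ᶠ x in 𝓝[>] (0:ℝ), 0 < g' x := by
    have h1 : ∀ᶠ x in 𝓝[≠] (0:ℝ), 0 < slope g' 0 x :=
      hslope.eventually (eventually_gt_nhds hdpos)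
    have h2 : ∀ᶠ x in 𝓝[>] (0:ℝ), 0 < slope g' 0 x :=
      h1.filter_mono (nhdsWithin_mono 0 (fun x hx => ne_of_gt hx))
    filter_upwards [h2, self_mem_nhdsWithin] with x hx hx'
    have : slope g' 0 x = g' x / x := by simp [slope_def_field, hg'0]
    rw [this] at hx
    have := mul_pos hx (show (0:ℝ) < x from hx')
    rwa [div_mul_cancel₀] at this
    exact ne_of_gt hx'
  have hE : {x : ℝ | x ∈ n ∧ g x ≤ g 0 ∧ 0 < g' x} ∈ 𝓝[>] (0:ℝ) := by
    have h1 : n ∈ 𝓝[>] (0:ℝ) := nhdsWithin_le_nhds hn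
    have h2 : {x | g x ≤ g 0} ∈ 𝓝[>] (0:ℝ) := nhdsWithin_le_nhds hmax
    filter_upwards [h1, h2, hpos] with x h1 h2 h3 using ⟨h1, h2, h3⟩
  obtain ⟨x0, hx0, hsub⟩ := mem_nhdsGT_iff_exists_Ioc_subset.mp hE
  have hx0pos : (0:ℝ) < x0 := hx0
  have hcont : ContinuousOn g (Icc 0 x0) := by
    intro x hx
    rcases eq_or_lt_of_le hx.1 with h | h
    · subst h
      exact ((hg 0 (mem_of_mem_nhds hn)).continuousAt).continuousWithinAt
    · exact ((hg x (hsub ⟨h, hx.2⟩).1).continuousAt).continuousWithinAt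
  have hmono : StrictMonoOn g (Icc 0 x0) := by
    apply strictMonoOn_of_deriv_pos (convex_Icc 0 x0) hcont
    intro x hx
    rw [interior_Icc] at hx
    have hxm : x ∈ Ioc 0 x0 := ⟨hx.1, le_of_lt hx.2⟩
    rw [(hg x (hsub hxm).1).deriv]
    exact (hsub hxm).2.2
  have h1 : g 0 < g x0 := hmono ⟨le_refl 0, le_of_lt hx0pos⟩
    ⟨le_of_lt hx0pos, le_refl x0⟩ hx0pos
  exact absurd (hsub ⟨hx0pos, le_refl x0⟩).2.1 (not_le.mpr h1)

/-- Derivative of a function restricted to a line. -/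
lemma aux_hasDerivAt_line (F : ℝ × ℝ → ℝ) (p e : ℝ × ℝ) (x : ℝ)
    (hF : DifferentiableAt ℝ F (p + x • e)) :
    HasDerivAt (fun y : ℝ => F (p + y • e)) (fderiv ℝ F (p + x • e) e) x := by
  have h1 : HasDerivAt (fun y : ℝ => p + y • e) e x := by
    have := ((hasDerivAt_id x).smul_const e).const_add p
    simpa using this
  exact hF.hasFDerivAt.comp_hasDerivAt x h1

/-- No interior local max with positive pure second directional derivative. -/
lemma aux_second_dir_test (w : ℝ × ℝ → ℝ) {Ω : Set (ℝ × ℝ)} (hΩ : IsOpen Ω)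
    {p : ℝ × ℝ} (hp : p ∈ Ω) (e : ℝ × ℝ)
    (hdiff : ∀ q ∈ Ω, DifferentiableAt ℝ w q)
    (hmax : IsLocalMax w p)
    (hF1 : DifferentiableAt ℝ (fun q => fderiv ℝ w q e) p)
    (hd2 : 0 < fderiv ℝ (fun q => fderiv ℝ w q e) p e) : False := by
  set g : ℝ → ℝ := fun x => w (p + x • e) with hg_def
  set g' : ℝ → ℝ := fun x => fderiv ℝ w (p + x • e) e with hg'_def
  have hline : Continuous (fun x : ℝ => p + x • e) := by continuity
  set n : Set ℝ := (fun x : ℝ => p + x • e) ⁻¹' Ω with hn_def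
  have hn : n ∈ 𝓝 (0:ℝ) := by
    have : IsOpen n := hΩ.preimage hline
    exact this.mem_nhds (by simp [hn_def, hp])
  have hg : ∀ x ∈ n, HasDerivAt g (g' x) x := fun x hx =>
    aux_hasDerivAt_line w p e x (hdiff _ hx)
  have hgmax : IsLocalMax g 0 := by
    have ht : Tendsto (fun x : ℝ => p + x • e) (𝓝 0) (𝓝 p) := by
      have := hline.continuousAt (x := (0:ℝ))
      simpa [ContinuousAt] using this
    have := ht.eventually hmax
    simpa [hg_def, IsLocalMax, IsMaxFilter] using this
  have hg'0 : g' 0 = 0 := by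
    have := hmax.fderiv_eq_zero
    simp [hg'_def, this]
  have hd : HasDerivAt g' (fderiv ℝ (fun q => fderiv ℝ w q e) p e) 0 := by
    have := aux_hasDerivAt_line (fun q => fderiv ℝ w q e) p e 0 (by simpa using hF1)
    simpa using this
  exact aux_no_localmax_of_pos_secondderiv hn hg hgmax hg'0 hd hd2

lemma aux_exp_hasFDerivAt (a k : ℝ) (q : ℝ × ℝ) :
    HasFDerivAt (fun x : ℝ × ℝ => a * Real.exp (k * x.1))
      ((a * k * Real.exp (k * q.1)) • ContinuousLinearMap.fst ℝ ℝ ℝ) q := by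
  have h1 : HasDerivAt (fun s : ℝ => a * Real.exp (k * s))
      (a * k * Real.exp (k * q.1)) q.1 := by
    have h2 : HasDerivAt (fun s : ℝ => k * s) k q.1 := by
      simpa using (hasDerivAt_id q.1).const_mul k
    have h3 := (Real.hasDerivAt_exp (k * q.1)).comp q.1 h2
    have := h3.const_mul a
    rw [show a * k * Real.exp (k * q.1) = a * (Real.exp (k * q.1) * k) by ring]
    exact this
  have h4 : HasFDerivAt (fun x : ℝ × ℝ => x.1) (ContinuousLinearMap.fst ℝ ℝ ℝ) q :=
    hasFDerivAt_fst
  have := h1.comp_hasFDerivAt q h4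
  exact this

lemma aux_exp_diff (a k : ℝ) (q : ℝ × ℝ) :
    DifferentiableAt ℝ (fun x : ℝ × ℝ => a * Real.exp (k * x.1)) q :=
  (aux_exp_hasFDerivAt a k q).differentiableAt

lemma aux_pderivS_exp (a k : ℝ) (q : ℝ × ℝ) :
    pderivS (fun x : ℝ × ℝ => a * Real.exp (k * x.1)) q = a * k * Real.exp (k * q.1) := by
  rw [pderivS, (aux_exp_hasFDerivAt a k q).fderiv]
  simp

lemma aux_pderivT_exp (a k : ℝ) (q : ℝ × ℝ) :
    pderivT (fun x : ℝ × ℝ => a * Real.exp (k * x.1)) q = 0 := by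
  rw [pderivT, (aux_exp_hasFDerivAt a k q).fderiv]
  simp

/-- differentiability of a first partial of a C² function -/
lemma aux_pderiv_diff {F : ℝ × ℝ → ℝ} {p : ℝ × ℝ} (hF : ContDiffAt ℝ 2 F p) (e : ℝ × ℝ) :
    DifferentiableAt ℝ (fun q => fderiv ℝ F q e) p := by
  have h1 : ContDiffAt ℝ 1 (fderiv ℝ F) p := hF.fderiv_right (by norm_num)
  have h2 : DifferentiableAt ℝ (fderiv ℝ F) p := h1.differentiableAt (by norm_num)
  exact ((ContinuousLinearMap.apply ℝ ℝ e).differentiable.differentiableAt).comp p h2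

/-- Weak maximum principle for `∂_s² + ∂_t² − b ∂_s` with drift `b` bounded on one side,
on an open subset `Ω` of the strip `(−T,T) × ℝ` invariant under `(s,t) ↦ (s,t+1)`,
for a continuous function `u` that is `1`-periodic in `t` and `C²` on `Ω`:
the supremum of `u` over the closure of `Ω` equals its supremum over the frontier of `Ω`. -/
theorem sup_closure_eq_sup_frontier_of_subsolution
    (T c : ℝ) (hT : 0 < T) (hc : 0 ≤ c)
    (Ω : Set (ℝ × ℝ)) (hΩopen : IsOpen Ω) (hΩne : Ω.Nonempty)
    (hΩstrip : Ω ⊆ Set.Ioo (-T) T ×ˢ (Set.univ : Set ℝ))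
    (hΩinv : (fun p : ℝ × ℝ => (p.1, p.2 + 1)) '' Ω = Ω)
    (u : ℝ × ℝ → ℝ) (hu : Continuous u)
    (huper : ∀ s t : ℝ, u (s, t + 1) = u (s, t))
    (huC2 : ContDiffOn ℝ 2 u Ω)
    (b : ℝ × ℝ → ℝ)
    (hb : (∀ p ∈ Ω, -c ≤ b p) ∨ (∀ p ∈ Ω, b p ≤ c))
    (hineq : ∀ p ∈ Ω,
      0 ≤ pderivS (pderivS u) p + pderivT (pderivT u) p - b p * pderivS u p) :
    sSup (u '' closure Ω) = sSup (u '' frontier Ω) := by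
  -- choice of drift-dominating exponent
  obtain ⟨k, hkb⟩ : ∃ k : ℝ, ∀ q ∈ Ω, 0 < k * k - b q * k := by
    rcases hb with hb | hb
    · exact ⟨-(c+1), fun q hq => by nlinarith [hb q hq]⟩
    · exact ⟨c+1, fun q hq => by nlinarith [hb q hq]⟩
  -- translation invariance of the closure
  set φ : ℝ × ℝ ≃ₜ ℝ × ℝ := (Homeomorph.refl ℝ).prodCongr (Homeomorph.addRight (1:ℝ)) with hφ
  have hclos : (fun p : ℝ × ℝ => (p.1, p.2 + 1)) '' closure Ω = closure Ω := by
    have h1 : (fun p : ℝ × ℝ => (p.1, p.2 + 1)) = ⇑φ := rfl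
    rw [h1, φ.image_closure, ← h1, hΩinv]
  have hfwd : ∀ q ∈ closure Ω, ((q.1, q.2 + 1) : ℝ × ℝ) ∈ closure Ω := by
    intro q hq; rw [← hclos]; exact ⟨q, hq, rfl⟩
  have hbwd : ∀ q ∈ closure Ω, ((q.1, q.2 - 1) : ℝ × ℝ) ∈ closure Ω := by
    intro q hq
    rw [← hclos] at hq
    obtain ⟨r, hr, hrq⟩ := hq
    have hrq' : ((r.1, r.2 + 1) : ℝ × ℝ) = q := hrq
    subst hrq'
    simpa using hr
  have htrans : ∀ n : ℤ, ∀ q ∈ closure Ω, ((q.1, q.2 + n) : ℝ × ℝ) ∈ closure Ω := by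
    intro n
    induction n using Int.induction_on with
    | zero => intro q hq; simpa using hq
    | succ m ih =>
        intro q hq
        have h := hfwd (q.1, q.2 + (m : ℝ)) (ih q hq)
        convert h using 2
        push_cast; ring
    | pred m ih =>
        intro q hq
        have h := hbwd (q.1, q.2 + (-(m : ℝ))) (by simpa using ih q hq)
        convert h using 2
        push_cast; ring
  have huperZ : ∀ n : ℤ, ∀ s t : ℝ, u (s, t + n) = u (s, t) := by
    intro n
    induction n using Int.induction_on with
    | zero => intro s t; simp
    | succ m ih =>
        intro s t
        have h1 : (t + ((m : ℤ) + 1 : ℤ) : ℝ) = (t + (m : ℝ)) + 1 := by push_cast; ring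
        rw [h1, huper s (t + (m : ℝ))]
        simpa using ih s t
    | pred m ih =>
        intro s t
        have h := huper s (t + ((-(m:ℤ) - 1 : ℤ) : ℝ))
        have e1 : (t + ((-(m:ℤ) - 1 : ℤ) : ℝ)) + 1 = t + ((-(m:ℤ) : ℤ) : ℝ) := by
          push_cast; ring
        rw [e1] at h
        rw [← h]
        exact ih s t
  -- the closure lies in the closed strip
  have hclosSub : closure Ω ⊆ Icc (-T) T ×ˢ (univ : Set ℝ) := by
    have h1 : closure Ω ⊆ closure (Ioo (-T) T ×ˢ (univ : Set ℝ)) := closure_mono hΩstrip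
    rwa [closure_prod_eq, closure_univ, closure_Ioo (by linarith : (-T) ≠ T)] at h1
  -- compact fundamental domain
  set K : Set (ℝ × ℝ) := closure Ω ∩ (Icc (-T) T ×ˢ Icc (0:ℝ) 1) with hK
  have hKcomp : IsCompact K :=
    IsCompact.of_isClosed_subset (isCompact_Icc.prod isCompact_Icc)
      (isClosed_closure.inter ((isClosed_Icc).prod isClosed_Icc)) inter_subset_right
  have hbox : ∀ q ∈ closure Ω, ∃ q' ∈ K, q'.1 = q.1 ∧ u q' = u q := by
    intro q hq
    have hmem : ((q.1, q.2 + ((-⌊q.2⌋ : ℤ) : ℝ)) : ℝ × ℝ) ∈ closure Ω := htrans _ q hq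
    have hsnd : q.2 + ((-⌊q.2⌋ : ℤ) : ℝ) ∈ Icc (0:ℝ) 1 := by
      constructor
      · push_cast
        linarith [Int.floor_le q.2]
      · push_cast
        linarith [Int.lt_floor_add_one q.2]
    have hfst : q.1 ∈ Icc (-T) T := (hclosSub hq).1
    have huq : u (q.1, q.2 + ((-⌊q.2⌋ : ℤ) : ℝ)) = u q := by
      have := huperZ (-⌊q.2⌋) q.1 q.2
      simpa using this
    exact ⟨(q.1, q.2 + ((-⌊q.2⌋ : ℤ) : ℝ)), ⟨hmem, hfst, hsnd⟩, rfl, huq⟩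
  have hKne : K.Nonempty := by
    obtain ⟨p0, hp0⟩ := hΩne
    obtain ⟨q', hq', _, _⟩ := hbox p0 (subset_closure hp0)
    exact ⟨q', hq'⟩
  -- image over closure equals image over K
  have himg : u '' closure Ω = u '' K := by
    apply Subset.antisymm
    · rintro _ ⟨q, hq, rfl⟩
      obtain ⟨q', hq', _, h2⟩ := hbox q hq
      exact ⟨q', hq', h2⟩
    · exact image_mono (f := u) inter_subset_left
  have hbddc : BddAbove (u '' closure Ω) := by
    rw [himg]
    exact (hKcomp.image_of_continuousOn hu.continuousOn).bddAbove
  -- the frontier is nonempty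
  have hfrontier : frontier Ω = closure Ω \ Ω := by
    rw [hΩopen.frontier_eq]
  have hfne : (frontier Ω).Nonempty := by
    rw [nonempty_iff_ne_empty]
    intro h
    have hclopen : IsClopen Ω := isClopen_iff_frontier_eq_empty.mpr h
    rcases isClopen_iff.mp hclopen with h1 | h1
    · exact absurd h1 (nonempty_iff_ne_empty.mp hΩne)
    · have : ((T, 0) : ℝ × ℝ) ∈ Ω := h1 ▸ mem_univ _
      have := (hΩstrip this).1.2
      linarith
  set M := sSup (u '' frontier Ω) with hM
  have hfsub : u '' frontier Ω ⊆ u '' closure Ω := image_mono (f := u) frontier_subset_closure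
  have hbddf : BddAbove (u '' frontier Ω) := BddAbove.mono hfsub hbddc
  -- main bound
  have hmain : ∀ q ∈ closure Ω, u q ≤ M := by
    intro q0 hq0
    set C := Real.exp (|k| * T) with hC
    have hCpos : 0 < C := Real.exp_pos _
    apply le_of_forall_pos_le_add
    intro ε' hε'
    set ε := ε' / C with hεdef
    have hε : 0 < ε := div_pos hε' hCpos
    set w : ℝ × ℝ → ℝ := fun q => u q + ε * Real.exp (k * q.1) with hw
    have hwc : Continuous w := by
      apply hu.add
      exact continuous_const.mul (Real.continuous_exp.comp (continuous_const.mul continuous_fst))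
    obtain ⟨p, hpK, hpmax'⟩ := hKcomp.exists_isMaxOn hKne hwc.continuousOn
    have hpmax : ∀ q ∈ K, w q ≤ w p := fun q hq => hpmax' hq
    have hwmaxall : ∀ q ∈ closure Ω, w q ≤ w p := by
      intro q hq
      obtain ⟨q', hq', h1, h2⟩ := hbox q hq
      have h3 : w q' = w q := by simp only [hw, h1, h2]
      rw [← h3]
      exact hpmax q' hq'
    have hpnΩ : p ∉ Ω := by
      intro hpΩ
      -- interior maximum: contradiction with the strict subsolution property
      have hCp : ContDiffAt ℝ 2 u p := (huC2 p hpΩ).contDiffAt (hΩopen.mem_nhds hpΩ)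
      have hudiff : ∀ q ∈ Ω, DifferentiableAt ℝ u q := fun q hq =>
        (((huC2 q hq).contDiffAt (hΩopen.mem_nhds hq)).differentiableAt (by norm_num))
      have hwdiff : ∀ q ∈ Ω, DifferentiableAt ℝ w q := fun q hq =>
        (hudiff q hq).add (aux_exp_diff ε k q)
      have hwmax : IsLocalMax w p := by
        filter_upwards [hΩopen.mem_nhds hpΩ] with q hq using hwmaxall q (subset_closure hq)
      have hfw0 : fderiv ℝ w p = 0 := hwmax.fderiv_eq_zero
      have hfw : ∀ q ∈ Ω, fderiv ℝ w q =
          fderiv ℝ u q + (ε * k * Real.exp (k * q.1)) • ContinuousLinearMap.fst ℝ ℝ ℝ :=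
        fun q hq => ((hudiff q hq).hasFDerivAt.add (aux_exp_hasFDerivAt ε k q)).fderiv
      have hSw : ∀ q ∈ Ω, pderivS w q = pderivS u q + ε * k * Real.exp (k * q.1) := by
        intro q hq
        rw [pderivS, hfw q hq]
        simp [pderivS]
      have hTw : ∀ q ∈ Ω, pderivT w q = pderivT u q := by
        intro q hq
        rw [pderivT, hfw q hq]
        simp [pderivT]
      set E := Real.exp (k * p.1) with hEdef
      have hEpos : 0 < E := Real.exp_pos _
      have hSwp : pderivS w p = 0 := by rw [pderivS, hfw0]; rfl
      have hSup : pderivS u p = -(ε * k * E) := by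
        have := hSw p hpΩ
        rw [hSwp] at this
        linarith
      -- second derivatives of w
      have hev : pderivS w =ᶠ[𝓝 p]
          (fun q => pderivS u q + (ε * k) * Real.exp (k * q.1)) := by
        filter_upwards [hΩopen.mem_nhds hpΩ] with q hq
        rw [hSw q hq]
      have hevT : pderivT w =ᶠ[𝓝 p] pderivT u := by
        filter_upwards [hΩopen.mem_nhds hpΩ] with q hq using hTw q hq
      have hd1 : DifferentiableAt ℝ (fun q => fderiv ℝ u q ((1:ℝ), (0:ℝ))) p :=
        aux_pderiv_diff hCp (1, 0)
      have hd2 : DifferentiableAt ℝ (fun q => fderiv ℝ u q ((0:ℝ), (1:ℝ))) p :=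
        aux_pderiv_diff hCp (0, 1)
      have hdexp : DifferentiableAt ℝ (fun q : ℝ × ℝ => (ε * k) * Real.exp (k * q.1)) p :=
        aux_exp_diff (ε * k) k p
      have hA : pderivS (pderivS w) p = pderivS (pderivS u) p + (ε * k) * k * E := by
        have h5 := aux_pderivS_exp (ε * k) k p
        rw [pderivS] at h5
        rw [pderivS, hev.fderiv_eq]
        simp only [pderivS]
        rw [fderiv_fun_add hd1 hdexp]
        simp only [ContinuousLinearMap.add_apply]
        rw [h5, hEdef]
        rfl
      have hB : pderivT (pderivT w) p = pderivT (pderivT u) p := by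
        rw [pderivT, hevT.fderiv_eq]
        rfl
      -- positivity of the sum of pure second derivatives
      have hiq := hineq p hpΩ
      rw [hSup] at hiq
      have hkbp := hkb p hpΩ
      have hsum : 0 < pderivS (pderivS w) p + pderivT (pderivT w) p := by
        rw [hA, hB]
        nlinarith [mul_pos (mul_pos hε hEpos) hkbp]
      -- differentiability of the first partials of w at p
      have hF1S : DifferentiableAt ℝ (fun q => fderiv ℝ w q ((1:ℝ), (0:ℝ))) p := by
        have h6 : DifferentiableAt ℝ
            (fun q => pderivS u q + (ε * k) * Real.exp (k * q.1)) p := hd1.add hdexp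
        exact h6.congr_of_eventuallyEq hev
      have hF1T : DifferentiableAt ℝ (fun q => fderiv ℝ w q ((0:ℝ), (1:ℝ))) p :=
        hd2.congr_of_eventuallyEq hevT
      rcases lt_or_ge 0 (pderivS (pderivS w) p) with hposS | hposS
      · exact aux_second_dir_test w hΩopen hpΩ (1, 0) hwdiff hwmax hF1S hposS
      · have hposT : 0 < pderivT (pderivT w) p := by linarith
        exact aux_second_dir_test w hΩopen hpΩ (0, 1) hwdiff hwmax hF1T hposT
    -- maximum on the frontier
    have hpf : p ∈ frontier Ω := by
      rw [hfrontier]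
      exact ⟨hpK.1, hpnΩ⟩
    have hup : u p ≤ M := le_csSup hbddf ⟨p, hpf, rfl⟩
    have hexp_le : Real.exp (k * p.1) ≤ C := by
      apply Real.exp_le_exp.mpr
      have h1 : |p.1| ≤ T := abs_le.mpr ⟨hpK.2.1.1, hpK.2.1.2⟩
      calc k * p.1 ≤ |k * p.1| := le_abs_self _
        _ = |k| * |p.1| := abs_mul _ _
        _ ≤ |k| * T := mul_le_mul_of_nonneg_left h1 (abs_nonneg k)
    have h3 : u q0 ≤ w q0 := by
      have : 0 ≤ ε * Real.exp (k * q0.1) := le_of_lt (mul_pos hε (Real.exp_pos _))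
      simp only [hw]
      linarith
    have h4 : w q0 ≤ w p := hwmaxall q0 hq0
    have h6 : ε * Real.exp (k * p.1) ≤ ε * C := mul_le_mul_of_nonneg_left hexp_le hε.le
    have h7 : ε * C = ε' := div_mul_cancel₀ _ (ne_of_gt hCpos)
    have h5 : w p = u p + ε * Real.exp (k * p.1) := rfl
    linarith
  have h1 : sSup (u '' closure Ω) ≤ M :=
    csSup_le ((hΩne.mono subset_closure).image u)
      (by rintro x ⟨q, hq, rfl⟩; exact hmain q hq)
  have h2 : M ≤ sSup (u '' closure Ω) := csSup_le_csSup hbddc (hfne.image u) hfsub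
  linarith
end

section
/- Let n ≥ 1 be an integer, let Ω ⊆ ℝ² be open, and let f : ℝ × (0,∞) → ℝ, (s,ρ) ↦ f_s(ρ), be twice continuously differentiable; write f_s'(ρ) := ∂_ρ f_s(ρ) and f_s''(ρ) := ∂_ρ² f_s(ρ). Suppose u, v : Ω → ℝⁿ are smooth, v(p) ≠ 0 for every p ∈ Ω, and on Ω the equations ∂_s u − ∂_t v = 0 and ∂_s v + ∂_t u − (f_s'(|v|)/|v|)·v = 0 hold. Then on Ω one has the identity (∂_s² + ∂_t² − f_s''(|v|)·∂_s)(|v|²/2) = |∂_s u|² + |∂_s v|² + (∂_s f_s')(|v|)·|v|. -/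
/-- Partial derivative in the first coordinate `s` of a map on `ℝ²`. -/
noncomputable def pdS {E : Type*} [NormedAddCommGroup E] [NormedSpace ℝ E]
    (w : ℝ × ℝ → E) (p : ℝ × ℝ) : E :=
  fderiv ℝ w p (1, 0)

/-- Partial derivative in the second coordinate `t` of a map on `ℝ²`. -/
noncomputable def pdT {E : Type*} [NormedAddCommGroup E] [NormedSpace ℝ E]
    (w : ℝ × ℝ → E) (p : ℝ × ℝ) : E :=
  fderiv ℝ w p (0, 1)

open scoped RealInnerProductSpace

set_option maxHeartbeats 4000000 in
/-- For a solution `(u,v)` of Floer's equation for the `s`-dependent radial Hamiltonian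
`(x,y) ↦ f_s(|y|)` on a region where `v ≠ 0`, one has the identity
`(∂_s² + ∂_t² − f_s''(|v|) ∂_s)(|v|²/2) = |∂_s u|² + |∂_s v|² + (∂_s f_s')(|v|)·|v|`. -/
theorem floer_radial_subsolution_identity
    (n : ℕ) (hn : 1 ≤ n)
    (Ω : Set (ℝ × ℝ)) (hΩ : IsOpen Ω)
    (f : ℝ → ℝ → ℝ)
    -- `(s,ρ) ↦ f_s(ρ)` is twice continuously differentiable on `ℝ × (0,∞)`
    (hf : ContDiffOn ℝ 2 (fun q : ℝ × ℝ => f q.1 q.2)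
      ((Set.univ : Set ℝ) ×ˢ Set.Ioi (0 : ℝ)))
    (u v : ℝ × ℝ → EuclideanSpace ℝ (Fin n))
    (hu : ContDiffOn ℝ (⊤ : ℕ∞) u Ω) (hv : ContDiffOn ℝ (⊤ : ℕ∞) v Ω)
    (hvne : ∀ p ∈ Ω, v p ≠ 0)
    -- the equations `∂_s u − ∂_t v = 0` and `∂_s v + ∂_t u − (f_s'(|v|)/|v|)·v = 0` on `Ω`
    (heq1 : ∀ p ∈ Ω, pdS u p - pdT v p = 0)
    (heq2 : ∀ p ∈ Ω,
      pdS v p + pdT u p - (deriv (f p.1) ‖v p‖ / ‖v p‖) • v p = 0) :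
    ∀ p ∈ Ω,
      pdS (pdS (fun q => ‖v q‖ ^ 2 / 2)) p
        + pdT (pdT (fun q => ‖v q‖ ^ 2 / 2)) p
        - deriv (deriv (f p.1)) ‖v p‖ * pdS (fun q => ‖v q‖ ^ 2 / 2) p
      = ‖pdS u p‖ ^ 2 + ‖pdS v p‖ ^ 2
        + deriv (fun σ : ℝ => deriv (f σ) ‖v p‖) p.1 * ‖v p‖ := by
  intro p hp
  classical
  have hΩp : Ω ∈ nhds p := hΩ.mem_nhds hp
  have hvp : v p ≠ 0 := hvne p hp
  have hρ : (0:ℝ) < ‖v p‖ := norm_pos_iff.mpr hvp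
  -- the two-variable function F and its open domain U
  set F : ℝ × ℝ → ℝ := fun q => f q.1 q.2 with hFdef
  set U : Set (ℝ × ℝ) := (Set.univ : Set ℝ) ×ˢ Set.Ioi (0:ℝ) with hUdef
  have hUopen : IsOpen U := isOpen_univ.prod isOpen_Ioi
  have hmemU : ∀ s ρ : ℝ, 0 < ρ → (s, ρ) ∈ U := by
    intro s ρ hρ'
    exact Set.mk_mem_prod (Set.mem_univ _) hρ'
  have hFdiff : ∀ z ∈ U, DifferentiableAt ℝ F z := fun z hz =>
    (hf.differentiableOn two_ne_zero).differentiableAt (hUopen.mem_nhds hz)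
  -- partial derivative of F in the second variable
  set F₁ : ℝ × ℝ → ℝ := fun z => fderiv ℝ F z (0, 1) with hF₁def
  have hDF : ContDiffOn ℝ 1 (fderiv ℝ F) U := hf.fderiv_of_isOpen hUopen (by norm_num)
  have hF₁C1 : ContDiffOn ℝ 1 F₁ U := hDF.clm_apply contDiffOn_const
  have hF₁diff : ∀ z ∈ U, DifferentiableAt ℝ F₁ z := fun z hz =>
    (hF₁C1.differentiableOn one_ne_zero).differentiableAt (hUopen.mem_nhds hz)
  -- relating deriv (f s) to F₁
  have hderiv : ∀ s ρ : ℝ, 0 < ρ → HasDerivAt (f s) (F₁ (s, ρ)) ρ := by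
    intro s ρ hρ'
    have h1 : HasDerivAt (fun r : ℝ => (s, r)) ((0:ℝ), (1:ℝ)) ρ :=
      (hasDerivAt_const ρ s).prodMk (hasDerivAt_id ρ)
    have h2 := (hFdiff (s, ρ) (hmemU s ρ hρ')).hasFDerivAt.comp_hasDerivAt ρ h1
    exact h2
  have hderiv_eq : ∀ s ρ : ℝ, 0 < ρ → deriv (f s) ρ = F₁ (s, ρ) := fun s ρ h =>
    (hderiv s ρ h).deriv
  -- the base point in U and second-order partials of f
  set z : ℝ × ℝ := (p.1, ‖v p‖) with hzdef
  have hzU : z ∈ U := hmemU _ _ hρ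
  have hF₁z : DifferentiableAt ℝ F₁ z := hF₁diff z hzU
  set a2 : ℝ := fderiv ℝ F₁ z (1, 0) with ha2def
  set b2 : ℝ := fderiv ℝ F₁ z (0, 1) with hb2def
  -- deriv (deriv (f p.1)) ‖v p‖ = b2
  have hdd : deriv (deriv (f p.1)) ‖v p‖ = b2 := by
    have h1 : deriv (f p.1) =ᶠ[nhds ‖v p‖] fun ρ => F₁ (p.1, ρ) := by
      filter_upwards [Ioi_mem_nhds hρ] with ρ hρ'
      exact hderiv_eq p.1 ρ hρ'
    rw [h1.deriv_eq]
    have h2 : HasDerivAt (fun ρ : ℝ => F₁ (p.1, ρ)) b2 ‖v p‖ :=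
      hF₁z.hasFDerivAt.comp_hasDerivAt ‖v p‖
        ((hasDerivAt_const _ _).prodMk (hasDerivAt_id _))
    exact h2.deriv
  -- deriv (fun σ => deriv (f σ) ‖v p‖) p.1 = a2
  have hds : deriv (fun σ : ℝ => deriv (f σ) ‖v p‖) p.1 = a2 := by
    have h1 : (fun σ : ℝ => deriv (f σ) ‖v p‖) = fun σ => F₁ (σ, ‖v p‖) :=
      funext fun σ => hderiv_eq σ _ hρ
    rw [h1]
    have h2 : HasDerivAt (fun σ : ℝ => F₁ (σ, ‖v p‖)) a2 p.1 := by
      have h := hF₁z.hasFDerivAt.comp_hasDerivAt p.1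
        ((hasDerivAt_id' p.1).prodMk (hasDerivAt_const p.1 ‖v p‖))
      exact h
    exact h2.deriv
  -- linearity of fderiv F₁ z
  have hF₁lin : ∀ x : ℝ, fderiv ℝ F₁ z ((1:ℝ), x) = a2 + x * b2 := by
    intro x
    have : ((1:ℝ), x) = ((1:ℝ), (0:ℝ)) + x • ((0:ℝ), (1:ℝ)) := by
      simp [Prod.ext_iff]
    rw [this, map_add, map_smul, smul_eq_mul, ha2def, hb2def]
  -- differentiability of u, v on Ω
  have hvd : ∀ q ∈ Ω, DifferentiableAt ℝ v q := fun q hq =>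
    (hv.differentiableOn (by simp)).differentiableAt (hΩ.mem_nhds hq)
  have hvdp : DifferentiableAt ℝ v p := hvd p hp
  have hDu : ContDiffOn ℝ 1 (fderiv ℝ u) Ω := hu.fderiv_of_isOpen hΩ (WithTop.coe_le_coe.mpr le_top)
  have hDud : DifferentiableAt ℝ (fderiv ℝ u) p :=
    (hDu.differentiableOn one_ne_zero).differentiableAt hΩp
  -- partial derivatives of u have derivatives via the second derivative of u
  have hpdud : ∀ w₀ : ℝ × ℝ, HasFDerivAt (fun q => fderiv ℝ u q w₀)
      ((ContinuousLinearMap.apply ℝ (EuclideanSpace ℝ (Fin n)) w₀).comp (fderiv ℝ (fderiv ℝ u) p)) p := by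
    intro w₀
    exact (ContinuousLinearMap.apply ℝ (EuclideanSpace ℝ (Fin n)) w₀).hasFDerivAt.comp p hDud.hasFDerivAt
  -- symmetry of the second derivative of u (Clairaut)
  have hsymm : fderiv ℝ (fderiv ℝ u) p ((1:ℝ),(0:ℝ)) ((0:ℝ),(1:ℝ))
      = fderiv ℝ (fderiv ℝ u) p ((0:ℝ),(1:ℝ)) ((1:ℝ),(0:ℝ)) := by
    have h2 : ContDiffAt ℝ 2 u p := (hu.contDiffAt hΩp).of_le (WithTop.coe_le_coe.mpr le_top)
    exact h2.isSymmSndFDerivAt (by simp) _ _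
  -- positivity of ‖v q‖ on Ω
  have hvq_pos : ∀ q ∈ Ω, (0:ℝ) < ‖v q‖ := fun q hq => norm_pos_iff.mpr (hvne q hq)
  -- the coefficient function G
  set G : ℝ × ℝ → ℝ := fun q => F₁ (q.1, ‖v q‖) * (‖v q‖)⁻¹ with hGdef
  -- rewriting the equations
  have heq1' : ∀ q ∈ Ω, pdT v q = pdS u q := by
    intro q hq
    have := heq1 q hq
    rw [sub_eq_zero] at this
    exact this.symm
  have heq2' : ∀ q ∈ Ω, pdS v q = G q • v q - pdT u q := by
    intro q hq
    have h0 := heq2 q hq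
    rw [sub_eq_zero] at h0
    have h1 : deriv (f q.1) ‖v q‖ / ‖v q‖ = G q := by
      rw [hderiv_eq q.1 _ (hvq_pos q hq), div_eq_mul_inv]
    rw [h1] at h0
    rw [eq_sub_iff_add_eq]
    exact h0
  -- first derivative of h := ‖v‖²/2 on Ω
  have hh : ∀ q ∈ Ω, HasFDerivAt (fun r => ‖v r‖ ^ 2 / 2)
      ((1/2 : ℝ) • ((fderivInnerCLM ℝ (v q, v q)).comp
        ((fderiv ℝ v q).prod (fderiv ℝ v q)))) q := by
    intro q hq
    have h1 : HasFDerivAt (fun r => ⟪v r, v r⟫)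
        ((fderivInnerCLM ℝ (v q, v q)).comp ((fderiv ℝ v q).prod (fderiv ℝ v q))) q :=
      (hvd q hq).hasFDerivAt.inner ℝ (hvd q hq).hasFDerivAt
    have h2 := h1.const_smul (1/2 : ℝ)
    have h3 : ((1/2 : ℝ) • fun r => ⟪v r, v r⟫) = fun r => ‖v r‖ ^ 2 / 2 := by
      funext r
      rw [Pi.smul_apply, real_inner_self_eq_norm_sq, smul_eq_mul]
      ring
    rwa [h3] at h2
  have hpdSh : ∀ q ∈ Ω, pdS (fun r => ‖v r‖ ^ 2 / 2) q = ⟪pdS v q, v q⟫ := by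
    intro q hq
    show fderiv ℝ (fun r => ‖v r‖ ^ 2 / 2) q ((1:ℝ),(0:ℝ)) = _
    rw [(hh q hq).fderiv]
    have hA : pdS v q = fderiv ℝ v q ((1:ℝ),(0:ℝ)) := rfl
    simp only [ContinuousLinearMap.smul_apply, ContinuousLinearMap.comp_apply,
      ContinuousLinearMap.prod_apply, fderivInnerCLM_apply, smul_eq_mul, hA]
    rw [real_inner_comm (v q) (fderiv ℝ v q ((1:ℝ),(0:ℝ)))]
    ring
  have hpdTh : ∀ q ∈ Ω, pdT (fun r => ‖v r‖ ^ 2 / 2) q = ⟪pdT v q, v q⟫ := by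
    intro q hq
    show fderiv ℝ (fun r => ‖v r‖ ^ 2 / 2) q ((0:ℝ),(1:ℝ)) = _
    rw [(hh q hq).fderiv]
    have hA : pdT v q = fderiv ℝ v q ((0:ℝ),(1:ℝ)) := rfl
    simp only [ContinuousLinearMap.smul_apply, ContinuousLinearMap.comp_apply,
      ContinuousLinearMap.prod_apply, fderivInnerCLM_apply, smul_eq_mul, hA]
    rw [real_inner_comm (v q) (fderiv ℝ v q ((0:ℝ),(1:ℝ)))]
    ring
  -- the substituted first-derivative functions
  set P₂ : ℝ × ℝ → ℝ :=
    fun q => G q * ⟪v q, v q⟫ - ⟪fderiv ℝ u q ((0:ℝ),(1:ℝ)), v q⟫ with hP₂def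
  set Q₂ : ℝ × ℝ → ℝ := fun q => ⟪fderiv ℝ u q ((1:ℝ),(0:ℝ)), v q⟫ with hQ₂def
  have hShP : pdS (fun q => ‖v q‖ ^ 2 / 2) =ᶠ[nhds p] P₂ := by
    filter_upwards [hΩp] with q hq
    rw [hpdSh q hq, heq2' q hq, inner_sub_left, real_inner_smul_left]
    rfl
  have hThQ : pdT (fun q => ‖v q‖ ^ 2 / 2) =ᶠ[nhds p] Q₂ := by
    filter_upwards [hΩp] with q hq
    rw [hpdTh q hq, heq1' q hq]
    rfl
  -- derivative of the norm at p
  have hIVV : HasFDerivAt (fun q => ⟪v q, v q⟫)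
      ((fderivInnerCLM ℝ (v p, v p)).comp ((fderiv ℝ v p).prod (fderiv ℝ v p))) p :=
    hvdp.hasFDerivAt.inner ℝ hvdp.hasFDerivAt
  set CVV : (ℝ × ℝ) →L[ℝ] ℝ :=
    (fderivInnerCLM ℝ (v p, v p)).comp ((fderiv ℝ v p).prod (fderiv ℝ v p)) with hCVVdef
  have hVVp : ⟪v p, v p⟫ = ‖v p‖ ^ 2 := real_inner_self_eq_norm_sq (v p)
  have hNorm : HasFDerivAt (fun q => ‖v q‖) ((1/(2 * ‖v p‖)) • CVV) p := by
    have hsq : Real.sqrt ⟪v p, v p⟫ = ‖v p‖ := by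
      rw [hVVp, Real.sqrt_sq (norm_nonneg _)]
    have hsqrt : HasDerivAt Real.sqrt (1/(2 * Real.sqrt ⟪v p, v p⟫)) ⟪v p, v p⟫ :=
      Real.hasDerivAt_sqrt (by rw [hVVp]; positivity)
    have h := hsqrt.comp_hasFDerivAt p hIVV
    rw [hsq] at h
    have hfun : (Real.sqrt ∘ fun q => ⟪v q, v q⟫) = fun q => ‖v q‖ := by
      funext q
      simp only [Function.comp_apply, real_inner_self_eq_norm_sq,
        Real.sqrt_sq (norm_nonneg _)]
    rwa [hfun] at h
  -- derivative of G at p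
  set LW : (ℝ × ℝ) →L[ℝ] (ℝ × ℝ) :=
    (ContinuousLinearMap.fst ℝ ℝ ℝ).prod ((1/(2 * ‖v p‖)) • CVV) with hLWdef
  have hW : HasFDerivAt (fun q : ℝ × ℝ => (q.1, ‖v q‖)) LW p :=
    ((ContinuousLinearMap.fst ℝ ℝ ℝ).hasFDerivAt).prodMk hNorm
  have hWp : (fun q : ℝ × ℝ => (q.1, ‖v q‖)) p = z := rfl
  have hF₁W : HasFDerivAt (fun q : ℝ × ℝ => F₁ (q.1, ‖v q‖))
      ((fderiv ℝ F₁ z).comp LW) p := by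
    have h := hF₁z.hasFDerivAt.comp p hW
    exact h
  have hInvN : HasFDerivAt (fun q => (‖v q‖)⁻¹)
      ((-(‖v p‖ ^ 2)⁻¹) • ((1/(2 * ‖v p‖)) • CVV)) p := by
    have hinv : HasDerivAt (fun x : ℝ => x⁻¹) (-(‖v p‖ ^ 2)⁻¹) ‖v p‖ :=
      hasDerivAt_inv hρ.ne'
    have h := hinv.comp_hasFDerivAt p hNorm
    exact h
  have hG : HasFDerivAt G
      ((F₁ z) • ((-(‖v p‖ ^ 2)⁻¹) • ((1/(2 * ‖v p‖)) • CVV))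
        + (‖v p‖)⁻¹ • ((fderiv ℝ F₁ z).comp LW)) p := hF₁W.mul hInvN
  -- HasFDerivAt for P₂ and Q₂
  have hsu : HasFDerivAt (fun q => fderiv ℝ u q ((1:ℝ),(0:ℝ)))
      ((ContinuousLinearMap.apply ℝ (EuclideanSpace ℝ (Fin n)) ((1:ℝ),(0:ℝ))).comp (fderiv ℝ (fderiv ℝ u) p)) p :=
    hpdud _
  have htu : HasFDerivAt (fun q => fderiv ℝ u q ((0:ℝ),(1:ℝ)))
      ((ContinuousLinearMap.apply ℝ (EuclideanSpace ℝ (Fin n)) ((0:ℝ),(1:ℝ))).comp (fderiv ℝ (fderiv ℝ u) p)) p :=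
    hpdud _
  set CG : (ℝ × ℝ) →L[ℝ] ℝ :=
    (F₁ z) • ((-(‖v p‖ ^ 2)⁻¹) • ((1/(2 * ‖v p‖)) • CVV))
      + (‖v p‖)⁻¹ • ((fderiv ℝ F₁ z).comp LW) with hCGdef
  set Cu1 : (ℝ × ℝ) →L[ℝ] (EuclideanSpace ℝ (Fin n)) :=
    (ContinuousLinearMap.apply ℝ (EuclideanSpace ℝ (Fin n)) ((1:ℝ),(0:ℝ))).comp (fderiv ℝ (fderiv ℝ u) p) with hCu1def
  set Cu2 : (ℝ × ℝ) →L[ℝ] (EuclideanSpace ℝ (Fin n)) :=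
    (ContinuousLinearMap.apply ℝ (EuclideanSpace ℝ (Fin n)) ((0:ℝ),(1:ℝ))).comp (fderiv ℝ (fderiv ℝ u) p) with hCu2def
  have hP₂ : HasFDerivAt P₂
      ((G p • CVV + ⟪v p, v p⟫ • CG)
        - (fderivInnerCLM ℝ (fderiv ℝ u p ((0:ℝ),(1:ℝ)), v p)).comp
            (Cu2.prod (fderiv ℝ v p))) p :=
    (hG.mul hIVV).sub (htu.inner ℝ hvdp.hasFDerivAt)
  have hQ₂ : HasFDerivAt Q₂
      ((fderivInnerCLM ℝ (fderiv ℝ u p ((1:ℝ),(0:ℝ)), v p)).comp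
        (Cu1.prod (fderiv ℝ v p))) p :=
    hsu.inner ℝ hvdp.hasFDerivAt
  -- abbreviations for the values at p
  set ρ : ℝ := ‖v p‖ with hρdef
  set A : EuclideanSpace ℝ (Fin n) := pdS v p with hAdef
  set su : EuclideanSpace ℝ (Fin n) := pdS u p with hsudef
  set c : ℝ := ⟪A, v p⟫ with hcdef
  set m : ℝ := ⟪fderiv ℝ (fderiv ℝ u) p ((1:ℝ),(0:ℝ)) ((0:ℝ),(1:ℝ)), v p⟫ with hmdef
  have hA10 : fderiv ℝ v p ((1:ℝ),(0:ℝ)) = A := rfl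
  have hA01 : fderiv ℝ v p ((0:ℝ),(1:ℝ)) = pdT v p := rfl
  -- value of CVV on basis vectors
  have hCVV10 : CVV ((1:ℝ),(0:ℝ)) = 2 * c := by
    rw [hCVVdef]
    simp only [ContinuousLinearMap.comp_apply, ContinuousLinearMap.prod_apply,
      fderivInnerCLM_apply, hA10]
    rw [hcdef, real_inner_comm A (v p)]
    ring
  -- value of pdS h at p
  have hpdShp : pdS (fun q => ‖v q‖ ^ 2 / 2) p = c := hpdSh p hp
  -- second derivative in s
  have hSS : pdS (pdS (fun q => ‖v q‖ ^ 2 / 2)) p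
      = G p * (2 * c) + ⟪v p, v p⟫ * CG ((1:ℝ),(0:ℝ))
        - (⟪fderiv ℝ u p ((0:ℝ),(1:ℝ)), A⟫ + m) := by
    show fderiv ℝ (pdS (fun q => ‖v q‖ ^ 2 / 2)) p ((1:ℝ),(0:ℝ)) = _
    rw [hShP.fderiv_eq, hP₂.fderiv]
    simp only [ContinuousLinearMap.sub_apply, ContinuousLinearMap.add_apply,
      ContinuousLinearMap.smul_apply, ContinuousLinearMap.comp_apply,
      ContinuousLinearMap.prod_apply, fderivInnerCLM_apply, hCu2def,
      ContinuousLinearMap.apply_apply, hA10, hCVV10, smul_eq_mul]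
    rfl
  -- second derivative in t
  have hTT : pdT (pdT (fun q => ‖v q‖ ^ 2 / 2)) p
      = ⟪su, pdT v p⟫ + m := by
    show fderiv ℝ (pdT (fun q => ‖v q‖ ^ 2 / 2)) p ((0:ℝ),(1:ℝ)) = _
    rw [hThQ.fderiv_eq, hQ₂.fderiv]
    simp only [ContinuousLinearMap.comp_apply, ContinuousLinearMap.prod_apply,
      fderivInnerCLM_apply, hCu1def, ContinuousLinearMap.apply_apply, hA01]
    rw [hmdef, ← hsymm]
    rfl
  -- value of the G-derivative term
  have h2ρc : (1/(2 * ρ)) * (2 * c) = c / ρ := by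
    field_simp
  have hLW10 : LW ((1:ℝ),(0:ℝ)) = ((1:ℝ), c / ρ) := by
    rw [hLWdef]
    apply Prod.ext
    · simp
    · simp only [ContinuousLinearMap.prod_apply, ContinuousLinearMap.smul_apply,
        hCVV10, smul_eq_mul]
      exact h2ρc
  have hCG10 : CG ((1:ℝ),(0:ℝ))
      = F₁ z * (-(ρ ^ 2)⁻¹ * (c / ρ)) + ρ⁻¹ * (a2 + (c / ρ) * b2) := by
    rw [hCGdef]
    simp only [ContinuousLinearMap.add_apply, ContinuousLinearMap.smul_apply,
      ContinuousLinearMap.comp_apply, hLW10, hF₁lin, hCVV10, smul_eq_mul, h2ρc]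
  -- values at p of the remaining quantities
  have hGp : G p = F₁ z * ρ⁻¹ := rfl
  have htu_p : fderiv ℝ u p ((0:ℝ),(1:ℝ)) = G p • v p - A := by
    have h := heq2' p hp
    have h2 : pdT u p = G p • v p - pdS v p := by
      rw [h]; abel
    exact h2
  have hsu_p : pdT v p = su := heq1' p hp
  have hinnAA : ⟪A, A⟫ = ‖A‖ ^ 2 := real_inner_self_eq_norm_sq A
  have hinnsusu : ⟪su, su⟫ = ‖su‖ ^ 2 := real_inner_self_eq_norm_sq su
  have hvpc : ⟪v p, A⟫ = c := real_inner_comm A (v p) ▸ rfl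
  have hρne : ρ ≠ 0 := hρ.ne'
  -- assemble
  rw [hSS, hTT, hdd, hds, hpdShp, hCG10, htu_p, inner_sub_left,
    real_inner_smul_left, hvpc, hinnAA, hsu_p, hinnsusu, hGp, hVVp]
  field_simp
  ring
end

section
/- Let n ≥ 1 be an integer and λ > 0. Let V : ℝ × ℝⁿ → ℝ be continuously differentiable, 1-periodic in the first variable, with ‖V‖_∞ := sup_{(t,q)} |V(t,q)| < ∞ and ‖∇V‖_∞ := sup_{(t,q)} |∇_q V(t,q)| < ∞. Let x : ℝ → ℝⁿ be a twice continuously differentiable 1-periodic curve satisfying ẍ(t) = −∇_q V(t, x(t)) for all t, and suppose that ∫₀¹ ( (1/2)|ẋ(t)|² − V(t, x(t)) ) dt ≤ λ²/2. Then sup_{t} |ẋ(t)|² ≤ λ² + 2‖V‖_∞ + ‖∇V‖_∞ · (1 + λ² + 2‖V‖_∞). -/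
/-- A priori bound on the velocity of a 1-periodic solution of `ẍ = −∇V(t,x)` whose
classical action `∫₀¹ ((1/2)|ẋ|² − V(t,x)) dt` is at most `λ²/2`:
`sup_t |ẋ(t)|² ≤ λ² + 2‖V‖_∞ + ‖∇V‖_∞ (1 + λ² + 2‖V‖_∞)`. -/
theorem velocity_bound_of_action_bound
    (n : ℕ) (hn : 1 ≤ n) (lam : ℝ) (hlam : 0 < lam)
    (V : ℝ → EuclideanSpace ℝ (Fin n) → ℝ)
    (hV : ContDiff ℝ 1 (fun q : ℝ × EuclideanSpace ℝ (Fin n) => V q.1 q.2))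
    (hVper : ∀ (t : ℝ) (x : EuclideanSpace ℝ (Fin n)), V (t + 1) x = V t x)
    -- `‖V‖_∞ < ∞` and `‖∇V‖_∞ < ∞`
    (hVbdd : BddAbove
      (Set.range fun q : ℝ × EuclideanSpace ℝ (Fin n) => |V q.1 q.2|))
    (hgradbdd : BddAbove
      (Set.range fun q : ℝ × EuclideanSpace ℝ (Fin n) => ‖gradient (V q.1) q.2‖))
    (x : ℝ → EuclideanSpace ℝ (Fin n))
    (hx : ContDiff ℝ 2 x)
    (hxper : ∀ t : ℝ, x (t + 1) = x t)
    -- the Euler–Lagrange equation `ẍ(t) = −∇V(t, x(t))`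
    (heq : ∀ t : ℝ, deriv (deriv x) t = -gradient (V t) (x t))
    -- the action bound
    (haction : (∫ t in (0:ℝ)..1, ((1:ℝ)/2) * ‖deriv x t‖ ^ 2 - V t (x t))
      ≤ lam ^ 2 / 2) :
    ∀ t : ℝ, ‖deriv x t‖ ^ 2 ≤
      lam ^ 2
      + 2 * sSup (Set.range fun q : ℝ × EuclideanSpace ℝ (Fin n) => |V q.1 q.2|)
      + sSup (Set.range fun q : ℝ × EuclideanSpace ℝ (Fin n) =>
          ‖gradient (V q.1) q.2‖)
        * (1 + lam ^ 2
          + 2 * sSup (Set.range fun q : ℝ × EuclideanSpace ℝ (Fin n) =>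
              |V q.1 q.2|)) := by
    classical
  set M : ℝ := sSup (Set.range fun q : ℝ × EuclideanSpace ℝ (Fin n) => |V q.1 q.2|) with hM
  set G : ℝ := sSup (Set.range fun q : ℝ × EuclideanSpace ℝ (Fin n) =>
      ‖gradient (V q.1) q.2‖) with hG
  set g : ℝ → ℝ := fun u => ‖deriv x u‖ ^ 2 with hgdef
  -- bounds by the supremum
  have hVle : ∀ (t : ℝ) (q : EuclideanSpace ℝ (Fin n)), |V t q| ≤ M := fun t q =>
    le_csSup hVbdd ⟨(t, q), rfl⟩
  have hGle : ∀ (t : ℝ) (q : EuclideanSpace ℝ (Fin n)), ‖gradient (V t) q‖ ≤ G := fun t q =>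
    le_csSup hgradbdd ⟨(t, q), rfl⟩
  have hM0 : 0 ≤ M := le_trans (abs_nonneg _) (hVle 0 0)
  have hG0 : 0 ≤ G := le_trans (norm_nonneg _) (hGle 0 0)
  -- regularity facts
  have h2 : ContDiff ℝ ((1:WithTop ℕ∞)+1) x := by exact_mod_cast hx
  have hdx1 : ContDiff ℝ 1 (deriv x) := (contDiff_succ_iff_deriv.mp h2).2.2
  have hvC : Continuous (deriv x) := (hdx1.differentiable one_ne_zero).continuous
  have haC : Continuous (deriv (deriv x)) := hdx1.continuous_deriv le_rfl
  have hgC : Continuous g := by continuity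
  have hVxC : Continuous fun t => V t (x t) :=
    hV.continuous.comp (continuous_id.prodMk hx.continuous)
  -- derivative of g
  have hdg : ∀ u : ℝ, HasDerivAt g
      (2 * inner ℝ (deriv (deriv x) u) (deriv x u)) u := by
    intro u
    have h1 : HasDerivAt (deriv x) (deriv (deriv x) u) u :=
      ((hdx1.differentiable one_ne_zero) u).hasDerivAt
    have := h1.inner ℝ h1
    simp only [real_inner_self_eq_norm_sq] at this
    exact this.congr_deriv (by rw [real_inner_comm]; ring)
  have hφC : Continuous fun u : ℝ => 2 * (inner ℝ (deriv (deriv x) u) (deriv x u) : ℝ) := by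
    exact continuous_const.mul (haC.inner hvC)
  -- periodicity of g
  have hper : Function.Periodic g 1 := by
    intro t
    have h1 : (fun u : ℝ => x (u + 1)) = x := funext hxper
    have : deriv x (t + 1) = deriv x t := by
      calc deriv x (t + 1) = deriv (fun u : ℝ => x (u + 1)) t :=
            (deriv_comp_add_const _ _ _).symm
        _ = deriv x t := by rw [h1]
    simp [hgdef, this]
  -- integrability
  have hgint : ∀ a b : ℝ, IntervalIntegrable g MeasureTheory.volume a b :=
    fun a b => hgC.intervalIntegrable a b
  -- bound on the kinetic integral
  have hI1 : (∫ t in (0:ℝ)..1, g t) ≤ lam ^ 2 + 2 * M := by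
    have hsplit : (∫ t in (0:ℝ)..1, ((1:ℝ)/2) * g t - V t (x t))
        = (1/2) * (∫ t in (0:ℝ)..1, g t) - ∫ t in (0:ℝ)..1, V t (x t) := by
      rw [intervalIntegral.integral_sub (f := fun t => ((1:ℝ)/2) * g t) ((continuous_const.mul hgC).intervalIntegrable 0 1)
        (hVxC.intervalIntegrable 0 1), intervalIntegral.integral_const_mul]
    have hVint : (∫ t in (0:ℝ)..1, V t (x t)) ≤ M := by
      have : (∫ t in (0:ℝ)..1, V t (x t)) ≤ ∫ _t in (0:ℝ)..1, M := by
        apply intervalIntegral.integral_mono_on (by norm_num)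
          (hVxC.intervalIntegrable 0 1) (intervalIntegrable_const)
        intro u _
        exact le_trans (le_abs_self _) (hVle u (x u))
      simpa using this
    have := haction
    rw [hsplit] at this
    linarith
  -- minimum point of g on [0,1]
  obtain ⟨t₀, ht₀mem, ht₀min⟩ :=
    (isCompact_Icc (a := (0:ℝ)) (b := 1)).exists_isMinOn ⟨0, by norm_num⟩ hgC.continuousOn
  have hgt₀ : g t₀ ≤ lam ^ 2 + 2 * M := by
    have h1 : g t₀ = ∫ _t in (0:ℝ)..1, g t₀ := by simp
    have h2 : (∫ _t in (0:ℝ)..1, g t₀) ≤ ∫ t in (0:ℝ)..1, g t := by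
      apply intervalIntegral.integral_mono_on (by norm_num) intervalIntegrable_const (hgint 0 1)
      intro u hu
      exact ht₀min hu
    linarith
  -- pointwise bound on the derivative of g
  have hφle : ∀ u : ℝ, 2 * (inner ℝ (deriv (deriv x) u) (deriv x u) : ℝ) ≤ G * (1 + g u) := by
    intro u
    have h1 : (inner ℝ (deriv (deriv x) u) (deriv x u) : ℝ)
        = -(inner ℝ (gradient (V u) (x u)) (deriv x u) : ℝ) := by
      rw [heq u, inner_neg_left]
    have h2 : |(inner ℝ (gradient (V u) (x u)) (deriv x u) : ℝ)|
        ≤ ‖gradient (V u) (x u)‖ * ‖deriv x u‖ := abs_real_inner_le_norm _ _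
    have h3 : ‖gradient (V u) (x u)‖ * ‖deriv x u‖ ≤ G * ‖deriv x u‖ :=
      mul_le_mul_of_nonneg_right (hGle u (x u)) (norm_nonneg _)
    have h4 : 2 * (G * ‖deriv x u‖) ≤ G * (1 + ‖deriv x u‖ ^ 2) := by
      nlinarith [sq_nonneg (‖deriv x u‖ - 1), norm_nonneg (deriv x u)]
    have h5 : -(inner ℝ (gradient (V u) (x u)) (deriv x u) : ℝ)
        ≤ ‖gradient (V u) (x u)‖ * ‖deriv x u‖ := by
      have := abs_le.mp h2
      linarith [this.1]
    rw [h1]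
    calc 2 * -(inner ℝ (gradient (V u) (x u)) (deriv x u) : ℝ)
        ≤ 2 * (G * ‖deriv x u‖) := by nlinarith
      _ ≤ G * (1 + ‖deriv x u‖ ^ 2) := h4
  -- main estimate
  intro t
  obtain ⟨s, hs, hgs⟩ := hper.exists_mem_Ico one_pos t t₀
  have hftc : (∫ u in t₀..s, 2 * (inner ℝ (deriv (deriv x) u) (deriv x u) : ℝ))
      = g s - g t₀ :=
    intervalIntegral.integral_eq_sub_of_hasDerivAt (fun u _ => hdg u)
      (hφC.intervalIntegrable t₀ s)
  have hGgC : Continuous fun u : ℝ => G * (1 + g u) :=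
    continuous_const.mul (continuous_const.add hgC)
  have hmono1 : (∫ u in t₀..s, 2 * (inner ℝ (deriv (deriv x) u) (deriv x u) : ℝ))
      ≤ ∫ u in t₀..s, G * (1 + g u) := by
    apply intervalIntegral.integral_mono_on hs.1 (hφC.intervalIntegrable t₀ s)
      (hGgC.intervalIntegrable t₀ s)
    exact fun u _ => hφle u
  have hmono2 : (∫ u in t₀..s, G * (1 + g u)) ≤ ∫ u in t₀..(t₀+1), G * (1 + g u) := by
    have hadd : (∫ u in t₀..s, G * (1 + g u)) + (∫ u in s..(t₀+1), G * (1 + g u))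
        = ∫ u in t₀..(t₀+1), G * (1 + g u) :=
      intervalIntegral.integral_add_adjacent_intervals (hGgC.intervalIntegrable t₀ s)
        (hGgC.intervalIntegrable s (t₀+1))
    have hnn : 0 ≤ ∫ u in s..(t₀+1), G * (1 + g u) := by
      apply intervalIntegral.integral_nonneg hs.2.le
      intro u _
      have : (0:ℝ) ≤ 1 + g u := by positivity
      positivity
    linarith
  have hperG : Function.Periodic (fun u : ℝ => G * (1 + g u)) 1 := by
    intro u; simp [hper u]
  have hshift : (∫ u in t₀..(t₀+1), G * (1 + g u)) = ∫ u in (0:ℝ)..1, G * (1 + g u) := by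
    have := hperG.intervalIntegral_add_eq t₀ 0
    simpa using this
  have hval : (∫ u in (0:ℝ)..1, G * (1 + g u)) = G * (1 + ∫ u in (0:ℝ)..1, g u) := by
    rw [intervalIntegral.integral_const_mul]
    congr 1
    rw [intervalIntegral.integral_add intervalIntegrable_const (hgint 0 1)]
    simp
  have hfinal : g s ≤ (lam ^ 2 + 2 * M) + G * (1 + (lam ^ 2 + 2 * M)) := by
    have : G * (1 + ∫ u in (0:ℝ)..1, g u) ≤ G * (1 + (lam ^ 2 + 2 * M)) :=
      mul_le_mul_of_nonneg_left (by linarith) hG0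
    linarith [hmono1, hmono2, hftc, hgt₀, hshift.le, hval.le, hval.ge]
  have : g t ≤ (lam ^ 2 + 2 * M) + G * (1 + (lam ^ 2 + 2 * M)) := by rw [hgs]; exact hfinal
  show g t ≤ lam ^ 2 + 2 * M + G * (1 + lam ^ 2 + 2 * M)
  linarith
end

section
/- Let n ≥ 1 be an integer and K ⊆ ℝⁿ × ℝⁿ a compact set. For a continuously differentiable function H : ℝ × ℝⁿ × ℝⁿ → ℝ that is 1-periodic in the first variable t, define the Hamiltonian vector field X_H(t,x,y) := (∇_y H(t,x,y), −∇_x H(t,x,y)) and, for a continuously differentiable 1-periodic loop z = (x,y) : ℝ → ℝⁿ × ℝⁿ, the symplectic action A_H(z) := ∫₀¹ ( ⟨y(t), ẋ(t)⟩ − H(t, x(t), y(t)) ) dt. Let a ∈ ℝ, let H_ν (ν ∈ ℕ) and H be such Hamiltonians with H_ν → H and ∇H_ν → ∇H uniformly on [0,1] × K (∇ being the gradient in the ℝⁿ × ℝⁿ variable), and suppose for each ν there is a continuously differentiable 1-periodic loop z_ν : ℝ → ℝⁿ × ℝⁿ with image contained in K satisfying ż_ν(t) = X_{H_ν}(t,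 z_ν(t)) for all t and A_{H_ν}(z_ν) = a. Then there exists a continuously differentiable 1-periodic loop z : ℝ → ℝⁿ × ℝⁿ with image contained in K satisfying ż(t) = X_H(t, z(t)) for all t and A_H(z) = a. -/
set_option maxHeartbeats 1000000
set_option synthInstance.maxHeartbeats 400000

/-- The Hamiltonian vector field `X_H(t,x,y) = (∇_y H(t,x,y), −∇_x H(t,x,y))`. -/
noncomputable def hamVectorField (n : ℕ)
    (H : ℝ → EuclideanSpace ℝ (Fin n) → EuclideanSpace ℝ (Fin n) → ℝ) (t : ℝ)
    (z : EuclideanSpace ℝ (Fin n) × EuclideanSpace ℝ (Fin n)) :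
    EuclideanSpace ℝ (Fin n) × EuclideanSpace ℝ (Fin n) :=
  (gradient (fun y => H t z.1 y) z.2, -gradient (fun x => H t x z.2) z.1)

/-- The symplectic action `A_H(z) = ∫₀¹ (⟨y(t), ẋ(t)⟩ − H(t,x(t),y(t))) dt` of a loop
`z = (x,y)`. -/
noncomputable def symplecticAction (n : ℕ)
    (H : ℝ → EuclideanSpace ℝ (Fin n) → EuclideanSpace ℝ (Fin n) → ℝ)
    (z : ℝ → EuclideanSpace ℝ (Fin n) × EuclideanSpace ℝ (Fin n)) : ℝ :=
  ∫ t in (0:ℝ)..1,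
    ((inner ℝ ((z t).2) ((deriv z t).1) : ℝ) - H t (z t).1 (z t).2)

section Helpers
open InnerProductSpace
noncomputable section
variable {n : ℕ}
local notation "X" => EuclideanSpace ℝ (Fin n)
local notation "E" => (EuclideanSpace ℝ (Fin n)) × (EuclideanSpace ℝ (Fin n))

private def iotaR : X →L[ℝ] E := (0 : X →L[ℝ] X).prod (ContinuousLinearMap.id ℝ X)
private def iotaL : X →L[ℝ] E := (ContinuousLinearMap.id ℝ X).prod (0 : X →L[ℝ] X)

private lemma norm_iotaR_le : ‖(iotaR (n := n))‖ ≤ 1 := by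
  refine ContinuousLinearMap.opNorm_le_bound _ zero_le_one fun v => ?_
  simp [iotaR, Prod.norm_def]
private lemma norm_iotaL_le : ‖(iotaL (n := n))‖ ≤ 1 := by
  refine ContinuousLinearMap.opNorm_le_bound _ zero_le_one fun v => ?_
  simp [iotaL, Prod.norm_def]

private lemma hasFDerivAt_inW {H : ℝ → X → X → ℝ}
    (h : ContDiff ℝ 1 (fun q : ℝ × E => H q.1 q.2.1 q.2.2)) (t : ℝ) (z : E) :
    HasFDerivAt (fun w : E => H t w.1 w.2)
      ((fderiv ℝ (fun q : ℝ × E => H q.1 q.2.1 q.2.2) (t, z)).comp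
        ((0 : E →L[ℝ] ℝ).prod (ContinuousLinearMap.id ℝ E))) z := by
  have h1 : HasFDerivAt (fun w : E => ((t, w) : ℝ × E))
      ((0 : E →L[ℝ] ℝ).prod (ContinuousLinearMap.id ℝ E)) z :=
    HasFDerivAt.prodMk (hasFDerivAt_const t z) (hasFDerivAt_id z)
  exact ((h.differentiable one_ne_zero (t, z)).hasFDerivAt).comp z h1

private lemma hasFDerivAt_inY {H : ℝ → X → X → ℝ}
    (h : ContDiff ℝ 1 (fun q : ℝ × E => H q.1 q.2.1 q.2.2)) (t : ℝ) (z : E) :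
    HasFDerivAt (fun y : X => H t z.1 y)
      ((fderiv ℝ (fun w : E => H t w.1 w.2) z).comp (iotaR (n := n))) z.2 := by
  have h1 : HasFDerivAt (fun y : X => ((z.1, y) : E)) (iotaR (n := n)) z.2 :=
    HasFDerivAt.prodMk (hasFDerivAt_const z.1 z.2) (hasFDerivAt_id z.2)
  exact ((hasFDerivAt_inW h t z).differentiableAt.hasFDerivAt).comp z.2 h1

private lemma hasFDerivAt_inX {H : ℝ → X → X → ℝ}
    (h : ContDiff ℝ 1 (fun q : ℝ × E => H q.1 q.2.1 q.2.2)) (t : ℝ) (z : E) :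
    HasFDerivAt (fun x : X => H t x z.2)
      ((fderiv ℝ (fun w : E => H t w.1 w.2) z).comp (iotaL (n := n))) z.1 := by
  have h1 : HasFDerivAt (fun x : X => ((x, z.2) : E)) (iotaL (n := n)) z.1 :=
    HasFDerivAt.prodMk (hasFDerivAt_id z.1) (hasFDerivAt_const z.2 z.1)
  exact ((hasFDerivAt_inW h t z).differentiableAt.hasFDerivAt).comp z.1 h1

private lemma hamVectorField_eq {H : ℝ → X → X → ℝ}
    (h : ContDiff ℝ 1 (fun q : ℝ × E => H q.1 q.2.1 q.2.2)) (t : ℝ) (z : E) :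
    hamVectorField n H t z =
      ((toDual ℝ X).symm ((fderiv ℝ (fun w : E => H t w.1 w.2) z).comp (iotaR (n := n))),
       -(toDual ℝ X).symm ((fderiv ℝ (fun w : E => H t w.1 w.2) z).comp (iotaL (n := n)))) := by
  unfold hamVectorField gradient
  rw [(hasFDerivAt_inY h t z).fderiv, (hasFDerivAt_inX h t z).fderiv]

private lemma hamVectorField_sub_norm_le {H₁ H₂ : ℝ → X → X → ℝ}
    (h₁ : ContDiff ℝ 1 (fun q : ℝ × E => H₁ q.1 q.2.1 q.2.2))
    (h₂ : ContDiff ℝ 1 (fun q : ℝ × E => H₂ q.1 q.2.1 q.2.2)) (t : ℝ) (z : E) :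
    ‖hamVectorField n H₁ t z - hamVectorField n H₂ t z‖ ≤
      ‖fderiv ℝ (fun w : E => H₁ t w.1 w.2) z - fderiv ℝ (fun w : E => H₂ t w.1 w.2) z‖ := by
  set A := fderiv ℝ (fun w : E => H₁ t w.1 w.2) z
  set B := fderiv ℝ (fun w : E => H₂ t w.1 w.2) z
  rw [hamVectorField_eq h₁, hamVectorField_eq h₂]
  have key : ∀ (ι : X →L[ℝ] E), ‖ι‖ ≤ 1 →
      ‖(toDual ℝ X).symm (A.comp ι) - (toDual ℝ X).symm (B.comp ι)‖ ≤ ‖A - B‖ := by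
    intro ι hι
    rw [← map_sub, (toDual ℝ X).symm.norm_map, ← ContinuousLinearMap.sub_comp]
    calc ‖(A - B).comp ι‖ ≤ ‖A - B‖ * ‖ι‖ := ContinuousLinearMap.opNorm_comp_le _ _
      _ ≤ ‖A - B‖ * 1 := by gcongr
      _ = ‖A - B‖ := mul_one _
  rw [Prod.norm_def]
  simp only [Prod.fst_sub, Prod.snd_sub]
  refine max_le ?_ ?_
  · exact key _ norm_iotaR_le
  · rw [neg_sub_neg, norm_sub_rev]
    exact key _ norm_iotaL_le

private lemma hamVectorField_norm_le {H : ℝ → X → X → ℝ}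
    (h : ContDiff ℝ 1 (fun q : ℝ × E => H q.1 q.2.1 q.2.2)) (t : ℝ) (z : E) :
    ‖hamVectorField n H t z‖ ≤ ‖fderiv ℝ (fun w : E => H t w.1 w.2) z‖ := by
  set A := fderiv ℝ (fun w : E => H t w.1 w.2) z
  rw [hamVectorField_eq h]
  have key : ∀ (ι : X →L[ℝ] E), ‖ι‖ ≤ 1 → ‖(toDual ℝ X).symm (A.comp ι)‖ ≤ ‖A‖ := by
    intro ι hι
    rw [(toDual ℝ X).symm.norm_map]
    calc ‖A.comp ι‖ ≤ ‖A‖ * ‖ι‖ := ContinuousLinearMap.opNorm_comp_le _ _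
      _ ≤ ‖A‖ * 1 := by gcongr
      _ = ‖A‖ := mul_one _
  rw [Prod.norm_def]
  refine max_le (key _ norm_iotaR_le) ?_
  simpa using key _ norm_iotaL_le

private lemma continuous_fderivW {H : ℝ → X → X → ℝ}
    (h : ContDiff ℝ 1 (fun q : ℝ × E => H q.1 q.2.1 q.2.2)) :
    Continuous (fun p : ℝ × E => fderiv ℝ (fun w : E => H p.1 w.1 w.2) p.2) := by
  have e : (fun p : ℝ × E => fderiv ℝ (fun w : E => H p.1 w.1 w.2) p.2) =
      fun p : ℝ × E => (fderiv ℝ (fun q : ℝ × E => H q.1 q.2.1 q.2.2) p).comp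
        ((0 : E →L[ℝ] ℝ).prod (ContinuousLinearMap.id ℝ E)) := by
    funext p
    simpa using (hasFDerivAt_inW h p.1 p.2).fderiv
  rw [e]
  exact (h.continuous_fderiv one_ne_zero).clm_comp continuous_const

private lemma continuous_hamVectorField {H : ℝ → X → X → ℝ}
    (h : ContDiff ℝ 1 (fun q : ℝ × E => H q.1 q.2.1 q.2.2)) :
    Continuous (fun p : ℝ × E => hamVectorField n H p.1 p.2) := by
  have e : (fun p : ℝ × E => hamVectorField n H p.1 p.2) = fun p : ℝ × E =>
      ((toDual ℝ X).symm ((fderiv ℝ (fun w : E => H p.1 w.1 w.2) p.2).comp (iotaR (n := n))),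
       -(toDual ℝ X).symm ((fderiv ℝ (fun w : E => H p.1 w.1 w.2) p.2).comp (iotaL (n := n)))) :=
    funext fun p => hamVectorField_eq h p.1 p.2
  rw [e]
  have hc := continuous_fderivW h
  exact ((toDual ℝ X).symm.continuous.comp (hc.clm_comp continuous_const)).prodMk
    (((toDual ℝ X).symm.continuous.comp (hc.clm_comp continuous_const)).neg)

private lemma hamVectorField_periodic {H : ℝ → X → X → ℝ}
    (hper : ∀ t x y, H (t + 1) x y = H t x y) (t : ℝ) (z : E) :
    hamVectorField n H (t + 1) z = hamVectorField n H t z := by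
  have e1 : (fun y => H (t + 1) z.1 y) = fun y => H t z.1 y := funext fun y => hper t z.1 y
  have e2 : (fun x => H (t + 1) x z.2) = fun x => H t x z.2 := funext fun x => hper t x z.2
  simp only [hamVectorField, e1, e2]

/-- For a `1`-periodic function, the value at `Int.fract t` equals the value at `t`. -/
private lemma periodic_fract_eq {β : Type*} {f : ℝ → β} (h : Function.Periodic f 1) (t : ℝ) :
    f (Int.fract t) = f t := by
  have h2 := h.sub_int_mul_eq (x := t) ⌊t⌋
  rw [mul_one, Int.self_sub_floor] at h2
  exact h2

private lemma fract_mem_Icc (t : ℝ) : Int.fract t ∈ Set.Icc (0:ℝ) 1 :=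
  ⟨Int.fract_nonneg t, (Int.fract_lt_one t).le⟩

end
end Helpers

/-- If `a` is an action value of `1`-periodic orbits in a fixed compact set `K` for each
Hamiltonian `H_ν`, and `H_ν → H`, `∇H_ν → ∇H` uniformly on `[0,1] × K`, then `a` is an
action value of a `1`-periodic orbit of `H` contained in `K`. -/
theorem action_value_closed_under_uniform_limit
    (n : ℕ) (hn : 1 ≤ n)
    (K : Set (EuclideanSpace ℝ (Fin n) × EuclideanSpace ℝ (Fin n)))
    (hK : IsCompact K) (a : ℝ)
    (Hseq : ℕ → ℝ → EuclideanSpace ℝ (Fin n) → EuclideanSpace ℝ (Fin n) → ℝ)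
    (H : ℝ → EuclideanSpace ℝ (Fin n) → EuclideanSpace ℝ (Fin n) → ℝ)
    (hHseqC1 : ∀ ν : ℕ, ContDiff ℝ 1
      (fun q : ℝ × EuclideanSpace ℝ (Fin n) × EuclideanSpace ℝ (Fin n) =>
        Hseq ν q.1 q.2.1 q.2.2))
    (hHC1 : ContDiff ℝ 1
      (fun q : ℝ × EuclideanSpace ℝ (Fin n) × EuclideanSpace ℝ (Fin n) =>
        H q.1 q.2.1 q.2.2))
    (hHseqPer : ∀ ν : ℕ, ∀ t x y, Hseq ν (t + 1) x y = Hseq ν t x y)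
    (hHPer : ∀ t x y, H (t + 1) x y = H t x y)
    -- `H_ν → H` uniformly on `[0,1] × K`
    (hConv : TendstoUniformlyOn
      (fun (ν : ℕ)
           (q : ℝ × EuclideanSpace ℝ (Fin n) × EuclideanSpace ℝ (Fin n)) =>
        Hseq ν q.1 q.2.1 q.2.2)
      (fun q => H q.1 q.2.1 q.2.2) Filter.atTop (Set.Icc (0:ℝ) 1 ×ˢ K))
    -- `∇H_ν → ∇H` uniformly on `[0,1] × K`, where `∇` is the derivative in `(x,y)`
    (hConvGrad : TendstoUniformlyOn
      (fun (ν : ℕ)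
           (q : ℝ × EuclideanSpace ℝ (Fin n) × EuclideanSpace ℝ (Fin n)) =>
        fderiv ℝ (fun w : EuclideanSpace ℝ (Fin n) × EuclideanSpace ℝ (Fin n) =>
          Hseq ν q.1 w.1 w.2) q.2)
      (fun q => fderiv ℝ
        (fun w : EuclideanSpace ℝ (Fin n) × EuclideanSpace ℝ (Fin n) =>
          H q.1 w.1 w.2) q.2)
      Filter.atTop (Set.Icc (0:ℝ) 1 ×ˢ K))
    (zseq : ℕ → ℝ → EuclideanSpace ℝ (Fin n) × EuclideanSpace ℝ (Fin n))
    (hzC1 : ∀ ν : ℕ, ContDiff ℝ 1 (zseq ν))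
    (hzPer : ∀ ν : ℕ, ∀ t : ℝ, zseq ν (t + 1) = zseq ν t)
    (hzK : ∀ ν : ℕ, Set.range (zseq ν) ⊆ K)
    (hzEq : ∀ ν : ℕ, ∀ t : ℝ,
      deriv (zseq ν) t = hamVectorField n (Hseq ν) t (zseq ν t))
    (hzAct : ∀ ν : ℕ, symplecticAction n (Hseq ν) (zseq ν) = a) :
    ∃ z : ℝ → EuclideanSpace ℝ (Fin n) × EuclideanSpace ℝ (Fin n),
      ContDiff ℝ 1 z ∧ (∀ t : ℝ, z (t + 1) = z t) ∧ Set.range z ⊆ K ∧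
      (∀ t : ℝ, deriv z t = hamVectorField n H t (z t)) ∧
      symplecticAction n H z = a := by
  classical
  -- periodicity of loops
  have hzPer' : ∀ ν, Function.Periodic (zseq ν) 1 := fun ν t => hzPer ν t
  -- uniform convergence of the Hamiltonian vector fields on `[0,1] × K`
  have hVF : TendstoUniformlyOn (fun ν (p : ℝ × ((EuclideanSpace ℝ (Fin n)) × (EuclideanSpace ℝ (Fin n)))) => hamVectorField n (Hseq ν) p.1 p.2)
      (fun p => hamVectorField n H p.1 p.2) Filter.atTop (Set.Icc (0:ℝ) 1 ×ˢ K) := by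
    rw [Metric.tendstoUniformlyOn_iff] at hConvGrad ⊢
    intro ε hε
    filter_upwards [hConvGrad ε hε] with ν hν p hp
    have h1 := hν p hp
    rw [dist_eq_norm] at h1 ⊢
    calc ‖hamVectorField n H p.1 p.2 - hamVectorField n (Hseq ν) p.1 p.2‖
        ≤ ‖fderiv ℝ (fun w : ((EuclideanSpace ℝ (Fin n)) × (EuclideanSpace ℝ (Fin n))) => H p.1 w.1 w.2) p.2 -
            fderiv ℝ (fun w : ((EuclideanSpace ℝ (Fin n)) × (EuclideanSpace ℝ (Fin n))) => Hseq ν p.1 w.1 w.2) p.2‖ :=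
          hamVectorField_sub_norm_le hHC1 (hHseqC1 ν) p.1 p.2
      _ < ε := h1
  have hFcont : Continuous (fun p : ℝ × ((EuclideanSpace ℝ (Fin n)) × (EuclideanSpace ℝ (Fin n))) => hamVectorField n H p.1 p.2) :=
    continuous_hamVectorField hHC1
  -- bound on the limit vector field
  obtain ⟨C, hC⟩ : ∃ C, ∀ p ∈ Set.Icc (0:ℝ) 1 ×ˢ K, ‖hamVectorField n H p.1 p.2‖ ≤ C :=
    (isCompact_Icc.prod hK).exists_bound_of_continuousOn hFcont.continuousOn
  set M : ℝ := |C| + 1 with hMdef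
  have hM0 : (0:ℝ) ≤ M := by positivity
  -- eventual bound on the approximating vector fields
  have hEvB : ∀ᶠ ν in Filter.atTop, ∀ p ∈ Set.Icc (0:ℝ) 1 ×ˢ K, ‖hamVectorField n (Hseq ν) p.1 p.2‖ ≤ M := by
    rw [Metric.tendstoUniformlyOn_iff] at hVF
    filter_upwards [hVF 1 one_pos] with ν hν p hp
    have h1 := hν p hp
    rw [dist_eq_norm] at h1
    calc ‖hamVectorField n (Hseq ν) p.1 p.2‖
        = ‖hamVectorField n H p.1 p.2 -
            (hamVectorField n H p.1 p.2 - hamVectorField n (Hseq ν) p.1 p.2)‖ := by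
          rw [sub_sub_cancel]
      _ ≤ ‖hamVectorField n H p.1 p.2‖ +
            ‖hamVectorField n H p.1 p.2 - hamVectorField n (Hseq ν) p.1 p.2‖ :=
          norm_sub_le _ _
      _ ≤ |C| + 1 := add_le_add ((hC p hp).trans (le_abs_self C)) h1.le
  obtain ⟨N, hN⟩ := Filter.eventually_atTop.1 hEvB
  -- all orbits of late Hamiltonians have derivative bounded by `M`, everywhere
  have hDB : ∀ ν, N ≤ ν → ∀ t : ℝ, ‖deriv (zseq ν) t‖ ≤ M := by
    intro ν hν t
    have hperF : Function.Periodic (fun u => hamVectorField n (Hseq ν) u (zseq ν u)) 1 := by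
      intro u
      simp only
      rw [hzPer ν u, hamVectorField_periodic (hHseqPer ν)]
    have h1 : deriv (zseq ν) t =
        hamVectorField n (Hseq ν) (Int.fract t) (zseq ν (Int.fract t)) := by
      rw [hzEq ν t]
      exact (periodic_fract_eq hperF t).symm
    rw [h1]
    exact hN ν hν (Int.fract t, zseq ν (Int.fract t))
      ⟨fract_mem_Icc t, hzK ν ⟨Int.fract t, rfl⟩⟩
  -- hence those orbits are `M`-Lipschitz
  have hLip : ∀ ν, N ≤ ν → LipschitzWith (Real.toNNReal M) (zseq ν) := by
    intro ν hν
    refine lipschitzWith_of_nnnorm_deriv_le ((hzC1 ν).differentiable one_ne_zero) fun t => ?_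
    have h1 := hDB ν hν t
    rw [← NNReal.coe_le_coe, coe_nnnorm, Real.coe_toNNReal M hM0]
    exact h1
  -- Arzelà–Ascoli on the interval `[0,1]`
  haveI : CompactSpace (Set.Icc (0:ℝ) 1) := isCompact_iff_compactSpace.mp isCompact_Icc
  set u : ℕ → BoundedContinuousFunction (Set.Icc (0:ℝ) 1) ((EuclideanSpace ℝ (Fin n)) × (EuclideanSpace ℝ (Fin n))) := fun k =>
    BoundedContinuousFunction.mkOfCompact
      ⟨fun q => zseq (k + N) q.1, ((hzC1 (k + N)).continuous.comp continuous_subtype_val)⟩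
    with hu
  set A : Set (BoundedContinuousFunction (Set.Icc (0:ℝ) 1) ((EuclideanSpace ℝ (Fin n)) × (EuclideanSpace ℝ (Fin n)))) :=
    {f | LipschitzWith (Real.toNNReal M) f ∧ ∀ q, f q ∈ K} with hA
  have hAclosed : IsClosed A := by
    have e : A = {f : BoundedContinuousFunction (Set.Icc (0:ℝ) 1) ((EuclideanSpace ℝ (Fin n)) × (EuclideanSpace ℝ (Fin n))) |
        LipschitzWith (Real.toNNReal M) f} ∩
        ⋂ q, (fun f : BoundedContinuousFunction (Set.Icc (0:ℝ) 1) ((EuclideanSpace ℝ (Fin n)) × (EuclideanSpace ℝ (Fin n))) => f q) ⁻¹' K := by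
      ext f
      simp [hA, Set.mem_iInter]
    rw [e]
    refine IsClosed.inter ?_ (isClosed_iInter fun q =>
      hK.isClosed.preimage (continuous_eval_const q))
    have e2 : {f : BoundedContinuousFunction (Set.Icc (0:ℝ) 1) ((EuclideanSpace ℝ (Fin n)) × (EuclideanSpace ℝ (Fin n))) |
        LipschitzWith (Real.toNNReal M) f} =
        ⋂ (p) (q), {f : BoundedContinuousFunction (Set.Icc (0:ℝ) 1) ((EuclideanSpace ℝ (Fin n)) × (EuclideanSpace ℝ (Fin n))) |
          dist (f p) (f q) ≤ (Real.toNNReal M) * dist p q} := by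
      ext f
      simp only [Set.mem_setOf_eq, Set.mem_iInter, lipschitzWith_iff_dist_le_mul]
    rw [e2]
    exact isClosed_iInter fun p => isClosed_iInter fun q =>
      isClosed_le ((continuous_eval_const p).dist
        (continuous_eval_const q)) continuous_const
  have hAequi : Equicontinuous ((↑) : A → (Set.Icc (0:ℝ) 1) → ((EuclideanSpace ℝ (Fin n)) × (EuclideanSpace ℝ (Fin n)))) := by
    refine Metric.equicontinuous_of_continuity_modulus (fun d => M * d) ?_ _ ?_
    · have : Filter.Tendsto (fun d : ℝ => M * d) (nhds 0) (nhds (M * 0)) :=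
        (continuous_const.mul continuous_id).tendsto 0
      simpa using this
    · intro p q f
      have h1 := (f.2.1 : LipschitzWith (Real.toNNReal M) (f.1 : (Set.Icc (0:ℝ) 1) → ((EuclideanSpace ℝ (Fin n)) × (EuclideanSpace ℝ (Fin n))))).dist_le_mul p q
      rwa [Real.coe_toNNReal M hM0] at h1
  have hAcomp : IsCompact A :=
    BoundedContinuousFunction.arzela_ascoli₂ K hK A hAclosed (fun f q hf => hf.2 q) hAequi
  have huA : ∀ k, u k ∈ A := by
    intro k
    constructor
    · intro p q
      have h1 := hLip (k + N) (Nat.le_add_left N k) p.1 q.1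
      simpa [hu, Subtype.edist_eq] using h1
    · intro q
      exact hzK (k + N) ⟨q.1, rfl⟩
  obtain ⟨f, hfA, φ, hφmono, hφtend⟩ := hAcomp.tendsto_subseq huA
  -- the subsequence of indices
  set ψ : ℕ → ℕ := fun k => φ k + N with hψdef
  have hψN : ∀ k, N ≤ ψ k := fun k => Nat.le_add_left N (φ k)
  have hψ : Filter.Tendsto ψ Filter.atTop Filter.atTop :=
    Filter.tendsto_atTop_mono (fun k => Nat.le_add_right (φ k) N) hφmono.tendsto_atTop
  -- the limit loop
  set z : ℝ → ((EuclideanSpace ℝ (Fin n)) × (EuclideanSpace ℝ (Fin n))) := fun t => f ⟨Int.fract t, fract_mem_Icc t⟩ with hzdef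
  have hzKmem : ∀ t, z t ∈ K := fun t => hfA.2 _
  -- uniform convergence of the subsequence to `z` on all of `ℝ`
  have hUC : TendstoUniformly (fun k t => zseq (ψ k) t) z Filter.atTop := by
    rw [Metric.tendstoUniformly_iff]
    intro ε hε
    have hdist : Filter.Tendsto (fun k => dist ((u ∘ φ) k) f) Filter.atTop (nhds 0) := by
      rw [← tendsto_iff_dist_tendsto_zero]
      exact hφtend
    filter_upwards [hdist.eventually (gt_mem_nhds hε)] with k hk t
    have h1 : zseq (ψ k) t = u (φ k) ⟨Int.fract t, fract_mem_Icc t⟩ := by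
      simp only [hu, hψdef, BoundedContinuousFunction.mkOfCompact_apply, ContinuousMap.coe_mk]
      exact (periodic_fract_eq (hzPer' (φ k + N)) t).symm
    rw [h1]
    calc dist (z t) (u (φ k) ⟨Int.fract t, fract_mem_Icc t⟩)
        ≤ dist f (u (φ k)) := BoundedContinuousFunction.dist_coe_le_dist _
      _ < ε := by rwa [dist_comm]
  have hzcont : Continuous z :=
    hUC.continuous (Filter.Frequently.of_forall fun k => (hzC1 (ψ k)).continuous)
  have hzper : ∀ t : ℝ, z (t + 1) = z t := by
    intro t
    simp only [hzdef]
    congr 1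
    exact Subtype.ext (Int.fract_add_one t)
  have hzpt : ∀ t, Filter.Tendsto (fun k => zseq (ψ k) t) Filter.atTop (nhds (z t)) :=
    fun t => hUC.tendsto_at t
  -- subsequence versions of the uniform convergences
  have hVFk : TendstoUniformlyOn (fun k (p : ℝ × ((EuclideanSpace ℝ (Fin n)) × (EuclideanSpace ℝ (Fin n)))) => hamVectorField n (Hseq (ψ k)) p.1 p.2)
      (fun p => hamVectorField n H p.1 p.2) Filter.atTop (Set.Icc (0:ℝ) 1 ×ˢ K) :=
    fun U hU => hψ.eventually (hVF U hU)
  have hConvk : TendstoUniformlyOn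
      (fun k (q : ℝ × ((EuclideanSpace ℝ (Fin n)) × (EuclideanSpace ℝ (Fin n)))) => Hseq (ψ k) q.1 q.2.1 q.2.2)
      (fun q => H q.1 q.2.1 q.2.2) Filter.atTop (Set.Icc (0:ℝ) 1 ×ˢ K) :=
    fun U hU => hψ.eventually (hConv U hU)
  -- pointwise convergence of vector fields along the orbits
  have hpt : ∀ t : ℝ, Filter.Tendsto
      (fun k => hamVectorField n (Hseq (ψ k)) t (zseq (ψ k) t)) Filter.atTop
      (nhds (hamVectorField n H t (z t))) := by
    intro t
    have hmem : ((Int.fract t : ℝ), z t) ∈ Set.Icc (0:ℝ) 1 ×ˢ K := ⟨fract_mem_Icc t, hzKmem t⟩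
    have hgt : Filter.Tendsto (fun k => ((Int.fract t : ℝ), zseq (ψ k) t)) Filter.atTop
        (nhdsWithin ((Int.fract t : ℝ), z t) (Set.Icc (0:ℝ) 1 ×ˢ K)) := by
      rw [tendsto_nhdsWithin_iff]
      exact ⟨(tendsto_const_nhds.prodMk_nhds (hzpt t)),
        Filter.Eventually.of_forall fun k => ⟨fract_mem_Icc t, hzK (ψ k) ⟨t, rfl⟩⟩⟩
    have hcw : ContinuousWithinAt (fun p : ℝ × ((EuclideanSpace ℝ (Fin n)) × (EuclideanSpace ℝ (Fin n))) => hamVectorField n H p.1 p.2) (Set.Icc (0:ℝ) 1 ×ˢ K)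
        ((Int.fract t : ℝ), z t) := hFcont.continuousAt.continuousWithinAt
    have hmain := hVFk.tendsto_comp hcw hgt
    -- replace `Int.fract t` by `t` using periodicity
    have efrac : ∀ (G : ℝ → EuclideanSpace ℝ (Fin n) → EuclideanSpace ℝ (Fin n) → ℝ),
        (∀ u x y, G (u + 1) x y = G u x y) → ∀ w : ((EuclideanSpace ℝ (Fin n)) × (EuclideanSpace ℝ (Fin n))),
        hamVectorField n G (Int.fract t) w = hamVectorField n G t w := by
      intro G hGper w
      have hperG : Function.Periodic (fun u => hamVectorField n G u w) 1 := fun u =>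
        hamVectorField_periodic hGper u w
      exact periodic_fract_eq hperG t
    have e1 : (fun k => hamVectorField n (Hseq (ψ k)) (Int.fract t) (zseq (ψ k) t)) =
        fun k => hamVectorField n (Hseq (ψ k)) t (zseq (ψ k) t) :=
      funext fun k => efrac (Hseq (ψ k)) (hHseqPer (ψ k)) _
    rw [e1] at hmain
    rwa [efrac H hHPer (z t)] at hmain
  -- the integral identity for the limit loop
  have hginterand : Continuous (fun r : ℝ => hamVectorField n H r (z r)) :=
    hFcont.comp (continuous_id.prodMk hzcont)
  have hkey : ∀ t : ℝ, z t = z 0 + ∫ r in (0:ℝ)..t, hamVectorField n H r (z r) := by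
    intro t
    have hFTC : ∀ ν, ∫ r in (0:ℝ)..t, hamVectorField n (Hseq ν) r (zseq ν r)
        = zseq ν t - zseq ν 0 := by
      intro ν
      have h1 : ∀ x ∈ Set.uIcc (0:ℝ) t, DifferentiableAt ℝ (zseq ν) x :=
        fun x _ => ((hzC1 ν).differentiable one_ne_zero).differentiableAt
      have h2 : IntervalIntegrable (deriv (zseq ν)) MeasureTheory.volume 0 t :=
        ((hzC1 ν).continuous_deriv le_rfl).intervalIntegrable 0 t
      have h3 := intervalIntegral.integral_deriv_eq_sub h1 h2
      rw [← h3]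
      exact intervalIntegral.integral_congr fun r _ => (hzEq ν r).symm
    have hlhs : Filter.Tendsto
        (fun k => ∫ r in (0:ℝ)..t, hamVectorField n (Hseq (ψ k)) r (zseq (ψ k) r))
        Filter.atTop (nhds (∫ r in (0:ℝ)..t, hamVectorField n H r (z r))) := by
      refine intervalIntegral.tendsto_integral_filter_of_dominated_convergence
        (fun _ => M) ?_ ?_ (intervalIntegrable_const) ?_
      · exact Filter.Eventually.of_forall fun k =>
          ((continuous_hamVectorField (hHseqC1 (ψ k))).comp
            (continuous_id.prodMk (hzC1 (ψ k)).continuous)).aestronglyMeasurable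
      · refine Filter.Eventually.of_forall fun k => ?_
        refine Filter.Eventually.of_forall fun r _ => ?_
        rw [← hzEq (ψ k) r]
        exact hDB (ψ k) (hψN k) r
      · exact Filter.Eventually.of_forall fun r _ => hpt r
    have hrhs : Filter.Tendsto (fun k => zseq (ψ k) t - zseq (ψ k) 0) Filter.atTop
        (nhds (z t - z 0)) := (hzpt t).sub (hzpt 0)
    have e : (fun k => ∫ r in (0:ℝ)..t, hamVectorField n (Hseq (ψ k)) r (zseq (ψ k) r)) =
        fun k => zseq (ψ k) t - zseq (ψ k) 0 := funext fun k => hFTC (ψ k)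
    rw [e] at hlhs
    have := tendsto_nhds_unique hrhs hlhs
    rw [← this]
    abel
  -- derivative of the limit loop
  have hder : ∀ t : ℝ, HasDerivAt z (hamVectorField n H t (z t)) t := by
    intro t
    have h1 : HasDerivAt (fun v => z 0 + ∫ r in (0:ℝ)..v, hamVectorField n H r (z r))
        (hamVectorField n H t (z t)) t :=
      ((hginterand.integral_hasStrictDerivAt 0 t).hasDerivAt).const_add (z 0)
    exact h1.congr_of_eventuallyEq (Filter.Eventually.of_forall hkey)
  have hzderiv : ∀ t : ℝ, deriv z t = hamVectorField n H t (z t) := fun t => (hder t).deriv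
  have hzC1' : ContDiff ℝ 1 z := by
    rw [contDiff_one_iff_deriv]
    refine ⟨fun t => (hder t).differentiableAt, ?_⟩
    have e : deriv z = fun t => hamVectorField n H t (z t) := funext hzderiv
    rw [e]
    exact hginterand
  -- bound on `K` and on the Hamiltonians
  obtain ⟨R, hR⟩ : ∃ R, ∀ w ∈ K, ‖w‖ ≤ R := by
    obtain ⟨R, hR⟩ := hK.isBounded.exists_norm_le
    exact ⟨R, hR⟩
  obtain ⟨CH, hCH⟩ : ∃ CH, ∀ p ∈ Set.Icc (0:ℝ) 1 ×ˢ K, ‖H p.1 p.2.1 p.2.2‖ ≤ CH :=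
    (isCompact_Icc.prod hK).exists_bound_of_continuousOn hHC1.continuous.continuousOn
  have hHb : ∀ᶠ k in Filter.atTop, ∀ p ∈ Set.Icc (0:ℝ) 1 ×ˢ K, |Hseq (ψ k) p.1 p.2.1 p.2.2| ≤ CH + 1 := by
    rw [Metric.tendstoUniformlyOn_iff] at hConvk
    filter_upwards [hConvk 1 one_pos] with k hk p hp
    have h1 := hk p hp
    rw [Real.dist_eq] at h1
    calc |Hseq (ψ k) p.1 p.2.1 p.2.2|
        = |H p.1 p.2.1 p.2.2 - (H p.1 p.2.1 p.2.2 - Hseq (ψ k) p.1 p.2.1 p.2.2)| := by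
          rw [sub_sub_cancel]
      _ ≤ |H p.1 p.2.1 p.2.2| + |H p.1 p.2.1 p.2.2 - Hseq (ψ k) p.1 p.2.1 p.2.2| :=
          abs_sub _ _
      _ ≤ CH + 1 := add_le_add (hCH p hp) h1.le
  -- convergence of the actions
  have hact : Filter.Tendsto (fun k => symplecticAction n (Hseq (ψ k)) (zseq (ψ k)))
      Filter.atTop (nhds (symplecticAction n H z)) := by
    unfold symplecticAction
    refine intervalIntegral.tendsto_integral_filter_of_dominated_convergence
      (fun _ => R * M + (CH + 1)) ?_ ?_ (intervalIntegrable_const) ?_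
    · refine Filter.Eventually.of_forall fun k => Continuous.aestronglyMeasurable ?_
      have hc1 : Continuous fun t : ℝ =>
          (inner ℝ ((zseq (ψ k) t).2) ((deriv (zseq (ψ k)) t).1) : ℝ) := by
        exact ((continuous_snd.comp (hzC1 (ψ k)).continuous).inner
          (continuous_fst.comp ((hzC1 (ψ k)).continuous_deriv le_rfl)))
      have hc2 : Continuous fun t : ℝ => Hseq (ψ k) t (zseq (ψ k) t).1 (zseq (ψ k) t).2 :=
        (hHseqC1 (ψ k)).continuous.comp
          (continuous_id.prodMk (hzC1 (ψ k)).continuous)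
      exact hc1.sub hc2
    · filter_upwards [hHb] with k hk
      refine Filter.Eventually.of_forall fun t ht => ?_
      have htIcc : t ∈ Set.Icc (0:ℝ) 1 := by
        rw [Set.uIoc_of_le (zero_le_one' ℝ)] at ht
        exact ⟨ht.1.le, ht.2⟩
      have hKt : zseq (ψ k) t ∈ K := hzK (ψ k) ⟨t, rfl⟩
      have hinner : |(inner ℝ ((zseq (ψ k) t).2) ((deriv (zseq (ψ k)) t).1) : ℝ)| ≤ R * M := by
        calc |(inner ℝ ((zseq (ψ k) t).2) ((deriv (zseq (ψ k)) t).1) : ℝ)|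
            ≤ ‖(zseq (ψ k) t).2‖ * ‖(deriv (zseq (ψ k)) t).1‖ := abs_real_inner_le_norm _ _
          _ ≤ R * M := by
              have hb2 : ‖(zseq (ψ k) t).2‖ ≤ R :=
                le_trans (norm_snd_le _) (hR _ hKt)
              have hb1 : ‖(deriv (zseq (ψ k)) t).1‖ ≤ M :=
                le_trans (norm_fst_le _) (hDB (ψ k) (hψN k) t)
              have h0 : (0:ℝ) ≤ ‖(deriv (zseq (ψ k)) t).1‖ := norm_nonneg _
              exact mul_le_mul hb2 hb1 h0 ((norm_nonneg _).trans (hR _ hKt))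
      have hH : |Hseq (ψ k) t (zseq (ψ k) t).1 (zseq (ψ k) t).2| ≤ CH + 1 :=
        hk (t, zseq (ψ k) t) ⟨htIcc, hKt⟩
      calc ‖(inner ℝ ((zseq (ψ k) t).2) ((deriv (zseq (ψ k)) t).1) : ℝ) -
              Hseq (ψ k) t (zseq (ψ k) t).1 (zseq (ψ k) t).2‖
          ≤ |(inner ℝ ((zseq (ψ k) t).2) ((deriv (zseq (ψ k)) t).1) : ℝ)| +
            |Hseq (ψ k) t (zseq (ψ k) t).1 (zseq (ψ k) t).2| := abs_sub _ _
        _ ≤ R * M + (CH + 1) := add_le_add hinner hH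
    · refine Filter.Eventually.of_forall fun t ht => ?_
      have htIcc : t ∈ Set.Icc (0:ℝ) 1 := by
        rw [Set.uIoc_of_le (zero_le_one' ℝ)] at ht
        exact ⟨ht.1.le, ht.2⟩
      have h1 : Filter.Tendsto (fun k => (zseq (ψ k) t).2) Filter.atTop (nhds ((z t).2)) :=
        (continuous_snd.tendsto _).comp (hzpt t)
      have h2 : Filter.Tendsto (fun k => (deriv (zseq (ψ k)) t).1) Filter.atTop
          (nhds ((deriv z t).1)) := by
        have e : (fun k => (deriv (zseq (ψ k)) t).1) =
            fun k => (hamVectorField n (Hseq (ψ k)) t (zseq (ψ k) t)).1 :=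
          funext fun k => by rw [hzEq (ψ k) t]
        rw [e, hzderiv t]
        exact (continuous_fst.tendsto _).comp (hpt t)
      have h3 : Filter.Tendsto (fun k => Hseq (ψ k) t (zseq (ψ k) t).1 (zseq (ψ k) t).2)
          Filter.atTop (nhds (H t (z t).1 (z t).2)) := by
        have hmem : ((t : ℝ), z t) ∈ Set.Icc (0:ℝ) 1 ×ˢ K := ⟨htIcc, hzKmem t⟩
        have hgt : Filter.Tendsto (fun k => ((t : ℝ), zseq (ψ k) t)) Filter.atTop
            (nhdsWithin ((t : ℝ), z t) (Set.Icc (0:ℝ) 1 ×ˢ K)) := by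
          rw [tendsto_nhdsWithin_iff]
          exact ⟨tendsto_const_nhds.prodMk_nhds (hzpt t),
            Filter.Eventually.of_forall fun k => ⟨htIcc, hzK (ψ k) ⟨t, rfl⟩⟩⟩
        exact hConvk.tendsto_comp hHC1.continuous.continuousAt.continuousWithinAt hgt
      exact (h1.inner h2).sub h3
  have hfinal : symplecticAction n H z = a := by
    have e : (fun k => symplecticAction n (Hseq (ψ k)) (zseq (ψ k))) = fun _ => a :=
      funext fun k => hzAct (ψ k)
    rw [e] at hact
    exact (tendsto_nhds_unique tendsto_const_nhds hact).symm
  exact ⟨z, hzC1', hzper, Set.range_subset_iff.mpr hzKmem, hzderiv, hfinal⟩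
end
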